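/- With ρ : 𝕀_N → e_β H(B_n)_{λ,m} and σ : Ĥ(B_n) → 𝕀_N the algebra homomorphisms defined by e(i) ↦ e^H(i), X_j ↦ X_j e_β, Φ_a ↦ Φ^H_a := g_a e_β − Σ_{i∈β, r_a(i)≠i} (q_a−q_a^{−1})(1 − X^{−α_a})^{−1}e^H(i) + Σ_{i∈β, r_a(i)=i} q_a^{−1}e^H(i), and by X_j ↦ X_j, g_a ↦ Φ_a + Σ_{i∈β, r_a(i)≠i} (q_a−q_a^{−1})(1 − X^{−α_a})^{−1}e(i) − Σ_{i∈β, r_a(i)=i} q_a^{−1}e(i) respectively, the map σ factors through the canonical surjection Ĥ(B_n) → e_β H(B_n)_{λ,m} (the quotient map Ĥ(B_n) → H(B_n)_{λ,m} followed by multiplication by e_β), and the induced homomorphism e_β H(B_n)_{λ,m} → 𝕀_N is a two-sided inverse of ρ; in particular ρ is a K-algebra isomorphism. -/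

import Mathlib

/-!
Formalization of definitions from:
L. Poulain d'Andecy and R. Walker, "Affine Hecke algebras and generalisations
of quiver Hecke algebras for type B".

Presented algebras are realized as `RingQuot` quotients of free algebras.
-/

open scoped BigOperators Classical

noncomputable section

namespace PdAW

variable {K : Type} [Field K]

/-! ### The eigenvalue sets `I_λ` and `S` -/

/-- `I_λ = {λ^ε q^{2t} : ε ∈ {±1}, t ∈ ℤ}`. -/
def Iset (q lam : K) : Set K :=
  {x | ∃ ε : ℤ, (ε = 1 ∨ ε = -1) ∧ ∃ t : ℤ, x = lam ^ ε * q ^ (2 * t)}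

/-- `S = I_{λ_1} ∪ ⋯ ∪ I_{λ_l}`. -/
def Sset {l : ℕ} (q : K) (lam : Fin l → K) : Set K := ⋃ a, Iset q (lam a)

/-! ### The Weyl group action on tuples -/

variable {n : ℕ}

/-- The simple transposition exchanging the (0-based) entries `c` and `c+1`. -/
def swapMove (c : ℕ) (h : c + 1 < n) (i : Fin n → K) : Fin n → K :=
  i ∘ Equiv.swap ⟨c, Nat.lt_of_succ_lt h⟩ ⟨c + 1, h⟩

/-- The reflection `r_0`, inverting the first entry. -/
def invMove (h : 0 < n) (i : Fin n → K) : Fin n → K :=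
  Function.update i ⟨0, h⟩ (i ⟨0, h⟩)⁻¹

/-- One step of the symmetric-group action. -/
def AStep (i j : Fin n → K) : Prop := ∃ c, ∃ h : c + 1 < n, j = swapMove c h i

/-- One step of the type-B Weyl group action. -/
def BStep (i j : Fin n → K) : Prop := AStep i j ∨ ∃ h : 0 < n, j = invMove h i

/-- `j` lies in the `W(B_n)`-orbit of `i`. -/
def inOrbitB (i j : Fin n → K) : Prop := Relation.ReflTransGen BStep i j

/-- `β` is an orbit for the action of `W(B_n)`. -/
def IsBOrbit (β : Set (Fin n → K)) : Prop := ∃ i₀ ∈ β, β = {j | inOrbitB i₀ j}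

/-- `α` is a union of orbits for the symmetric group action (i.e. is closed under it). -/
def IsAClosed (α : Set (Fin n → K)) : Prop :=
  ∀ i ∈ α, ∀ c, ∀ h : c + 1 < n, swapMove c h i ∈ α

theorem fin_lt (c : Fin (n - 1)) : c.1 + 1 < n := by have := c.2; omega

/-- The 0-based position of the paper's index `b ∈ {1,…,n-1}` (namely `b-1`). -/
def lo (c : Fin (n - 1)) : Fin n := ⟨c.1, Nat.lt_of_succ_lt (fin_lt c)⟩

/-- The 0-based position `b` for the paper's index `b ∈ {1,…,n-1}`. -/
def hi (c : Fin (n - 1)) : Fin n := ⟨c.1 + 1, fin_lt c⟩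

/-- The action of the simple reflection `r_{c+1}` on tuples. -/
def sw (c : Fin (n - 1)) (i : Fin n → K) : Fin n → K := swapMove c.1 (fin_lt c) i

/-! ### Quiver arrows (for the quiver with arrows `i → q²i`) -/

/-- `i → j` : `j = q²i ≠ q⁻²i`. -/
def qarr (q i j : K) : Prop := j = q ^ 2 * i ∧ j ≠ (q ^ 2)⁻¹ * i

/-- `i ← j` : `j = q⁻²i ≠ q²i`. -/
def qbak (q i j : K) : Prop := j = (q ^ 2)⁻¹ * i ∧ j ≠ q ^ 2 * i

/-- `i ↔ j` : `j = q²i = q⁻²i`. -/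
def qdbl (q i j : K) : Prop := j = q ^ 2 * i ∧ j = (q ^ 2)⁻¹ * i

/-- `i ↮ j` : `i ≠ j` and `j ∉ {q²i, q⁻²i}`. -/
def qnon (q i j : K) : Prop := i ≠ j ∧ j ≠ q ^ 2 * i ∧ j ≠ (q ^ 2)⁻¹ * i

/-- `i⁻¹ →ᵖ i` : `i ∈ {±p}` and `i ∉ {±p⁻¹}`. -/
def parr (p i : K) : Prop := (i = p ∨ i = -p) ∧ ¬(i = p⁻¹ ∨ i = -p⁻¹)

/-- `i⁻¹ ←ᵖ i` : `i ∉ {±p}` and `i ∈ {±p⁻¹}`. -/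
def pbak (p i : K) : Prop := ¬(i = p ∨ i = -p) ∧ (i = p⁻¹ ∨ i = -p⁻¹)

/-- `i⁻¹ ↔ᵖ i` : `i ∈ {±p} ∩ {±p⁻¹}`. -/
def pdbl (p i : K) : Prop := (i = p ∨ i = -p) ∧ (i = p⁻¹ ∨ i = -p⁻¹)

/-- `i⁻¹ ↮ᵖ i` : `i ≠ i⁻¹` and `i ∉ {±p, ±p⁻¹}`. -/
def pnon (p i : K) : Prop := i ≠ i⁻¹ ∧ ¬(i = p ∨ i = -p ∨ i = p⁻¹ ∨ i = -p⁻¹)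

/-- The product `∏_{λ ∈ I} (x - λ)^{m(λ)}` (the factors pairwise commute). -/
def polyProd {A : Type} [Ring A] [Algebra K A] (x : A) (I : Finset K) (m : K → ℕ) : A :=
  I.noncommProd (fun lam => (x - algebraMap K A lam) ^ m lam) (by
    intro a _ b _ _
    have h1 : Commute x (algebraMap K A b) := (Algebra.commutes b x).symm
    have h2 : Commute (algebraMap K A a) x := Algebra.commutes a x
    have h3 : Commute (algebraMap K A a) (algebraMap K A b) := Algebra.commutes a _
    exact (((Commute.refl x).sub_right h1).sub_left (h2.sub_right h3)).pow_pow _ _)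

/-! ### The affine Hecke algebra of type A and its cyclotomic quotients -/

/-- Generators of the affine Hecke algebra `Ĥ(A_n)`:
`g c` is the paper's `g_{c+1}` (`c+1 ∈ {1,…,n-1}`), `X k` is `X_{k+1}`, `Xinv k` is `X_{k+1}⁻¹`. -/
inductive AGen (n : ℕ) : Type
  | g : Fin (n - 1) → AGen n
  | X : Fin n → AGen n
  | Xinv : Fin n → AGen n

def ag (c : Fin (n - 1)) : FreeAlgebra K (AGen n) := FreeAlgebra.ι K (AGen.g c)
def aX (k : Fin n) : FreeAlgebra K (AGen n) := FreeAlgebra.ι K (AGen.X k)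
def aXi (k : Fin n) : FreeAlgebra K (AGen n) := FreeAlgebra.ι K (AGen.Xinv k)

/-- Defining relations of the affine Hecke algebra `Ĥ(A_n)`. -/
inductive HARel (q : K) (n : ℕ) : FreeAlgebra K (AGen n) → FreeAlgebra K (AGen n) → Prop
  | quad (c : Fin (n - 1)) : HARel q n (ag c * ag c) ((q - q⁻¹) • ag c + 1)
  | braid (c c' : Fin (n - 1)) (h : c'.1 = c.1 + 1) :
      HARel q n (ag c * ag c' * ag c) (ag c' * ag c * ag c')
  | gcomm (c c' : Fin (n - 1)) (h : c.1 + 1 < c'.1) :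
      HARel q n (ag c * ag c') (ag c' * ag c)
  | Xcomm (k l : Fin n) : HARel q n (aX k * aX l) (aX l * aX k)
  | Xunit (k : Fin n) : HARel q n (aX k * aXi k) 1
  | Xunit' (k : Fin n) : HARel q n (aXi k * aX k) 1
  | gXg (c : Fin (n - 1)) : HARel q n (ag c * aX (lo c) * ag c) (aX (hi c))
  | gX (c : Fin (n - 1)) (k : Fin n) (h : k ≠ lo c ∧ k ≠ hi c) :
      HARel q n (ag c * aX k) (aX k * ag c)

/-- The affine Hecke algebra `Ĥ(A_n)`. -/
abbrev HeckeA (q : K) (n : ℕ) : Type := RingQuot (HARel q n)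

/-- Defining relations of the cyclotomic quotient `H(A_n)_{λ,m}`. -/
inductive HAcRel (q : K) (n : ℕ) (m : K →₀ ℕ) :
    FreeAlgebra K (AGen n) → FreeAlgebra K (AGen n) → Prop
  | ofA {a b : FreeAlgebra K (AGen n)} (h : HARel q n a b) : HAcRel q n m a b
  | cyc (h0 : 0 < n) : HAcRel q n m (polyProd (aX ⟨0, h0⟩) m.support ⇑m) 0

/-- The cyclotomic quotient `H(A_n)_{λ,m}`. -/
abbrev HeckeAc (q : K) (n : ℕ) (m : K →₀ ℕ) : Type := RingQuot (HAcRel q n m)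

/-! ### The affine Hecke algebra of type B and its cyclotomic quotients -/

inductive BGen (n : ℕ) : Type
  | g0 : BGen n
  | g : Fin (n - 1) → BGen n
  | X : Fin n → BGen n
  | Xinv : Fin n → BGen n

def bg0 : FreeAlgebra K (BGen n) := FreeAlgebra.ι K BGen.g0
def bg (c : Fin (n - 1)) : FreeAlgebra K (BGen n) := FreeAlgebra.ι K (BGen.g c)
def bX (k : Fin n) : FreeAlgebra K (BGen n) := FreeAlgebra.ι K (BGen.X k)
def bXi (k : Fin n) : FreeAlgebra K (BGen n) := FreeAlgebra.ι K (BGen.Xinv k)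

/-- Defining relations of the affine Hecke algebra `Ĥ(B_n)`. -/
inductive HBRel (p q : K) (n : ℕ) : FreeAlgebra K (BGen n) → FreeAlgebra K (BGen n) → Prop
  | quad0 : HBRel p q n (bg0 * bg0) ((p - p⁻¹) • bg0 + 1)
  | quad (c : Fin (n - 1)) : HBRel p q n (bg c * bg c) ((q - q⁻¹) • bg c + 1)
  | braid0 (h : 0 < n - 1) :
      HBRel p q n (bg0 * bg ⟨0, h⟩ * bg0 * bg ⟨0, h⟩) (bg ⟨0, h⟩ * bg0 * bg ⟨0, h⟩ * bg0)
  | braid (c c' : Fin (n - 1)) (h : c'.1 = c.1 + 1) :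
      HBRel p q n (bg c * bg c' * bg c) (bg c' * bg c * bg c')
  | gcomm (c c' : Fin (n - 1)) (h : c.1 + 1 < c'.1) :
      HBRel p q n (bg c * bg c') (bg c' * bg c)
  | g0comm (c : Fin (n - 1)) (h : 1 ≤ c.1) : HBRel p q n (bg0 * bg c) (bg c * bg0)
  | Xcomm (k l : Fin n) : HBRel p q n (bX k * bX l) (bX l * bX k)
  | Xunit (k : Fin n) : HBRel p q n (bX k * bXi k) 1
  | Xunit' (k : Fin n) : HBRel p q n (bXi k * bX k) 1
  | g0Xg0 (h0 : 0 < n) : HBRel p q n (bg0 * bXi ⟨0, h0⟩ * bg0) (bX ⟨0, h0⟩)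
  | gXg (c : Fin (n - 1)) : HBRel p q n (bg c * bX (lo c) * bg c) (bX (hi c))
  | gX (c : Fin (n - 1)) (k : Fin n) (h : k ≠ lo c ∧ k ≠ hi c) :
      HBRel p q n (bg c * bX k) (bX k * bg c)
  | g0X (k : Fin n) (h : k.1 ≠ 0) : HBRel p q n (bg0 * bX k) (bX k * bg0)

/-- The affine Hecke algebra `Ĥ(B_n)`. -/
abbrev HeckeB (p q : K) (n : ℕ) : Type := RingQuot (HBRel p q n)

/-- Defining relations of the cyclotomic quotient `H(B_n)_{λ,m}`. -/
inductive HBcRel (p q : K) (n : ℕ) (m : K →₀ ℕ) :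
    FreeAlgebra K (BGen n) → FreeAlgebra K (BGen n) → Prop
  | ofB {a b : FreeAlgebra K (BGen n)} (h : HBRel p q n a b) : HBcRel p q n m a b
  | cyc (h0 : 0 < n) : HBcRel p q n m (polyProd (bX ⟨0, h0⟩) m.support ⇑m) 0

/-- The cyclotomic quotient `H(B_n)_{λ,m}`. -/
abbrev HeckeBc (p q : K) (n : ℕ) (m : K →₀ ℕ) : Type := RingQuot (HBcRel p q n m)

/-! ### Spectral idempotent families and corner (block) algebras -/

/-- The characterizing properties of the family of idempotents `e^H(i)` projecting onto
the common generalized eigenspaces of commuting elements `Xs k` (acting by left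
multiplication): they are orthogonal idempotents summing to `1`, commuting with the
`Xs k`, with `(Xs k - i_k)` nilpotent on `E i`.  Such a family is unique. -/
def IsSpectralFamily {A : Type} [Ring A] [Algebra K A] (Xs : Fin n → A)
    (T : Finset (Fin n → K)) (E : (Fin n → K) → A) : Prop :=
  (∀ i, i ∉ T → E i = 0) ∧ (∑ i ∈ T, E i = 1) ∧
  (∀ i, E i * E i = E i) ∧ (∀ i j, i ≠ j → E i * E j = 0) ∧
  (∀ i k, Xs k * E i = E i * Xs k) ∧
  (∀ i ∈ T, ∀ k : Fin n, ∃ N : ℕ, 0 < N ∧ (Xs k - algebraMap K A (i k)) ^ N * E i = 0)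

/-- Relation identifying a central idempotent `e` with `1`. -/
def cornerRel {A : Type} [Ring A] (e : A) : A → A → Prop := fun x y => x = e ∧ y = 1

/-- For a central idempotent `e` of `A`, the corner algebra `eA` realized as the
quotient of `A` by the relation `e = 1`. -/
abbrev Corner (A : Type) [Ring A] (e : A) : Type := RingQuot (cornerRel e)

/-- Canonical algebra map `A → eA`. -/
def cornerMk {A : Type} [Ring A] [Algebra K A] (e : A) : A →ₐ[K] Corner A e :=
  RingQuot.mkAlgHom K (cornerRel e)

/-! ### Cyclotomic KLR algebras (type A quiver Hecke algebras) -/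

/-- Generators of the KLR algebra: `psi c` is the paper's `ψ_{c+1}`, `y k` is `y_{k+1}`,
`e i` for `i` in the index set `α`. -/
inductive RGen (K : Type) (n : ℕ) (α : Finset (Fin n → K)) : Type
  | psi : Fin (n - 1) → RGen K n α
  | y : Fin n → RGen K n α
  | e : {x // x ∈ α} → RGen K n α

def rψ {α : Finset (Fin n → K)} (c : Fin (n - 1)) : FreeAlgebra K (RGen K n α) :=
  FreeAlgebra.ι K (RGen.psi c)
def ry {α : Finset (Fin n → K)} (k : Fin n) : FreeAlgebra K (RGen K n α) :=
  FreeAlgebra.ι K (RGen.y k)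
def re {α : Finset (Fin n → K)} (i : {x // x ∈ α}) : FreeAlgebra K (RGen K n α) :=
  FreeAlgebra.ι K (RGen.e i)

/-- Defining relations of the cyclotomic KLR algebra `R^α_{λ,m}`. -/
inductive RRel (q : K) (n : ℕ) (α : Finset (Fin n → K)) (m : K →₀ ℕ) :
    FreeAlgebra K (RGen K n α) → FreeAlgebra K (RGen K n α) → Prop
  | esum : RRel q n α m (∑ i ∈ α.attach, re i) 1
  | eidem (i) : RRel q n α m (re i * re i) (re i)
  | eorth (i j) (h : i ≠ j) : RRel q n α m (re i * re j) 0
  | ycomm (k l : Fin n) : RRel q n α m (ry k * ry l) (ry l * ry k)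
  | ye (k : Fin n) (i) : RRel q n α m (ry k * re i) (re i * ry k)
  | psiE (c : Fin (n - 1)) (i : {x // x ∈ α}) (h' : sw c i.1 ∈ α) :
      RRel q n α m (rψ c * re i) (re ⟨sw c i.1, h'⟩ * rψ c)
  | psiyB (c : Fin (n - 1)) (i) (h : i.1 (lo c) = i.1 (hi c)) :
      RRel q n α m ((rψ c * ry (lo c) - ry (hi c) * rψ c) * re i) (-re i)
  | psiyB1 (c : Fin (n - 1)) (i) (h : i.1 (lo c) = i.1 (hi c)) :
      RRel q n α m ((rψ c * ry (hi c) - ry (lo c) * rψ c) * re i) (re i)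
  | psiyO (c : Fin (n - 1)) (i) (j : Fin n)
      (h : i.1 (lo c) ≠ i.1 (hi c) ∨ (j ≠ lo c ∧ j ≠ hi c)) :
      RRel q n α m ((rψ c * ry j - ry (Equiv.swap (lo c) (hi c) j) * rψ c) * re i) 0
  | psicomm (c c' : Fin (n - 1)) (h : c.1 + 1 < c'.1) :
      RRel q n α m (rψ c * rψ c') (rψ c' * rψ c)
  | sqEq (c : Fin (n - 1)) (i) (h : i.1 (lo c) = i.1 (hi c)) :
      RRel q n α m (rψ c * rψ c * re i) 0
  | sqNon (c : Fin (n - 1)) (i) (h : qnon q (i.1 (lo c)) (i.1 (hi c))) :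
      RRel q n α m (rψ c * rψ c * re i) (re i)
  | sqArr (c : Fin (n - 1)) (i) (h : qarr q (i.1 (lo c)) (i.1 (hi c))) :
      RRel q n α m (rψ c * rψ c * re i) ((ry (hi c) - ry (lo c)) * re i)
  | sqBak (c : Fin (n - 1)) (i) (h : qbak q (i.1 (lo c)) (i.1 (hi c))) :
      RRel q n α m (rψ c * rψ c * re i) ((ry (lo c) - ry (hi c)) * re i)
  | sqDbl (c : Fin (n - 1)) (i) (h : qdbl q (i.1 (lo c)) (i.1 (hi c))) :
      RRel q n α m (rψ c * rψ c * re i) ((ry (hi c) - ry (lo c)) * ((ry (lo c) - ry (hi c)) * re i))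
  | brArr (c c' : Fin (n - 1)) (hcc : c'.1 = c.1 + 1) (i) (h1 : i.1 (lo c) = i.1 (hi c'))
      (h2 : qarr q (i.1 (lo c)) (i.1 (hi c))) :
      RRel q n α m ((rψ c * rψ c' * rψ c - rψ c' * rψ c * rψ c') * re i) (re i)
  | brBak (c c' : Fin (n - 1)) (hcc : c'.1 = c.1 + 1) (i) (h1 : i.1 (lo c) = i.1 (hi c'))
      (h2 : qbak q (i.1 (lo c)) (i.1 (hi c))) :
      RRel q n α m ((rψ c * rψ c' * rψ c - rψ c' * rψ c * rψ c') * re i) (-re i)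
  | brDbl (c c' : Fin (n - 1)) (hcc : c'.1 = c.1 + 1) (i) (h1 : i.1 (lo c) = i.1 (hi c'))
      (h2 : qdbl q (i.1 (lo c)) (i.1 (hi c))) :
      RRel q n α m ((rψ c * rψ c' * rψ c - rψ c' * rψ c * rψ c') * re i)
        ((ry (hi c') + ry (lo c) - ry (hi c) - ry (hi c)) * re i)
  | brEls (c c' : Fin (n - 1)) (hcc : c'.1 = c.1 + 1) (i)
      (h : ¬(i.1 (lo c) = i.1 (hi c') ∧ (qarr q (i.1 (lo c)) (i.1 (hi c)) ∨
            qbak q (i.1 (lo c)) (i.1 (hi c)) ∨ qdbl q (i.1 (lo c)) (i.1 (hi c))))) :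
      RRel q n α m ((rψ c * rψ c' * rψ c - rψ c' * rψ c * rψ c') * re i) 0
  | cyc (i) (h0 : 0 < n) :
      RRel q n α m (ry ⟨0, h0⟩ ^ m (i.1 ⟨0, h0⟩) * re i) 0

/-- The cyclotomic KLR algebra `R^α_{λ,m}`. -/
abbrev KLR (q : K) (n : ℕ) (α : Finset (Fin n → K)) (m : K →₀ ℕ) : Type :=
  RingQuot (RRel q n α m)

/-! ### The generalized Varagnolo–Vasserot algebras `V^β_λ` and cyclotomic quotients -/

inductive VGen (K : Type) (n : ℕ) (β : Finset (Fin n → K)) : Type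
  | psi0 : VGen K n β
  | psi : Fin (n - 1) → VGen K n β
  | y : Fin n → VGen K n β
  | e : {x // x ∈ β} → VGen K n β

def vψ0 {β : Finset (Fin n → K)} : FreeAlgebra K (VGen K n β) := FreeAlgebra.ι K VGen.psi0
def vψ {β : Finset (Fin n → K)} (c : Fin (n - 1)) : FreeAlgebra K (VGen K n β) :=
  FreeAlgebra.ι K (VGen.psi c)
def vy {β : Finset (Fin n → K)} (k : Fin n) : FreeAlgebra K (VGen K n β) :=
  FreeAlgebra.ι K (VGen.y k)
def ve {β : Finset (Fin n → K)} (i : {x // x ∈ β}) : FreeAlgebra K (VGen K n β) :=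
  FreeAlgebra.ι K (VGen.e i)

/-- Case conditions appearing in the four-term relation (Rel:V11). -/
def c4a (q i1 i2 : K) : Prop := i1⁻¹ ≠ i1 ∧ qarr q i1 i2 ∧ i2⁻¹ = i2
def c4b (q i1 i2 : K) : Prop := i1⁻¹ ≠ i1 ∧ qbak q i1 i2 ∧ i2⁻¹ = i2
def c4c (q i1 i2 : K) : Prop := i1⁻¹ = i1 ∧ qdbl q i1 i2 ∧ i2⁻¹ = i2
def c4d (p i1 i2 : K) : Prop := i2 ≠ i1 ∧ pbak p i1⁻¹ ∧ i1⁻¹ = i2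
def c4e (p i1 i2 : K) : Prop := i2 ≠ i1 ∧ parr p i1⁻¹ ∧ i1⁻¹ = i2
def c4f (p i1 i2 : K) : Prop := i2 ≠ i1 ∧ pdbl p i1⁻¹ ∧ i1⁻¹ = i2

/-- `((ψ_0ψ_1)² - (ψ_1ψ_0)²) e(i)`. -/
def vfour {β : Finset (Fin n → K)} (h2 : 1 < n) (i : {x // x ∈ β}) :
    FreeAlgebra K (VGen K n β) :=
  (vψ0 * vψ ⟨0, by omega⟩ * vψ0 * vψ ⟨0, by omega⟩ -
    vψ ⟨0, by omega⟩ * vψ0 * vψ ⟨0, by omega⟩ * vψ0) * ve i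

/-- Defining relations of the cyclotomic quotient `V^β_{λ,m}` of the generalized
Varagnolo–Vasserot algebra (Definition 2.1 of the paper, plus the cyclotomic relation). -/
inductive VRel (p q : K) (n : ℕ) (β : Finset (Fin n → K)) (m : K →₀ ℕ) :
    FreeAlgebra K (VGen K n β) → FreeAlgebra K (VGen K n β) → Prop
  | esum : VRel p q n β m (∑ i ∈ β.attach, ve i) 1
  | eidem (i) : VRel p q n β m (ve i * ve i) (ve i)
  | eorth (i j) (h : i ≠ j) : VRel p q n β m (ve i * ve j) 0
  | ycomm (k l : Fin n) : VRel p q n β m (vy k * vy l) (vy l * vy k)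
  | ye (k : Fin n) (i) : VRel p q n β m (vy k * ve i) (ve i * vy k)
  | psiE (c : Fin (n - 1)) (i : {x // x ∈ β}) (h' : sw c i.1 ∈ β) :
      VRel p q n β m (vψ c * ve i) (ve ⟨sw c i.1, h'⟩ * vψ c)
  | psi0E (i : {x // x ∈ β}) (h0 : 0 < n) (h' : invMove h0 i.1 ∈ β) :
      VRel p q n β m (vψ0 * ve i) (ve ⟨invMove h0 i.1, h'⟩ * vψ0)
  | psiyB (c : Fin (n - 1)) (i) (h : i.1 (lo c) = i.1 (hi c)) :
      VRel p q n β m ((vψ c * vy (lo c) - vy (hi c) * vψ c) * ve i) (-ve i)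
  | psiyB1 (c : Fin (n - 1)) (i) (h : i.1 (lo c) = i.1 (hi c)) :
      VRel p q n β m ((vψ c * vy (hi c) - vy (lo c) * vψ c) * ve i) (ve i)
  | psiyO (c : Fin (n - 1)) (i) (j : Fin n)
      (h : i.1 (lo c) ≠ i.1 (hi c) ∨ (j ≠ lo c ∧ j ≠ hi c)) :
      VRel p q n β m ((vψ c * vy j - vy (Equiv.swap (lo c) (hi c) j) * vψ c) * ve i) 0
  | psicomm (c c' : Fin (n - 1)) (h : c.1 + 1 < c'.1) :
      VRel p q n β m (vψ c * vψ c') (vψ c' * vψ c)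
  | psicomm0 (c : Fin (n - 1)) (h : 1 ≤ c.1) : VRel p q n β m (vψ0 * vψ c) (vψ c * vψ0)
  | sqEq (c : Fin (n - 1)) (i) (h : i.1 (lo c) = i.1 (hi c)) :
      VRel p q n β m (vψ c * vψ c * ve i) 0
  | sqNon (c : Fin (n - 1)) (i) (h : qnon q (i.1 (lo c)) (i.1 (hi c))) :
      VRel p q n β m (vψ c * vψ c * ve i) (ve i)
  | sqArr (c : Fin (n - 1)) (i) (h : qarr q (i.1 (lo c)) (i.1 (hi c))) :
      VRel p q n β m (vψ c * vψ c * ve i) ((vy (hi c) - vy (lo c)) * ve i)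
  | sqBak (c : Fin (n - 1)) (i) (h : qbak q (i.1 (lo c)) (i.1 (hi c))) :
      VRel p q n β m (vψ c * vψ c * ve i) ((vy (lo c) - vy (hi c)) * ve i)
  | sqDbl (c : Fin (n - 1)) (i) (h : qdbl q (i.1 (lo c)) (i.1 (hi c))) :
      VRel p q n β m (vψ c * vψ c * ve i) ((vy (hi c) - vy (lo c)) * ((vy (lo c) - vy (hi c)) * ve i))
  | brArr (c c' : Fin (n - 1)) (hcc : c'.1 = c.1 + 1) (i) (h1 : i.1 (lo c) = i.1 (hi c'))
      (h2 : qarr q (i.1 (lo c)) (i.1 (hi c))) :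
      VRel p q n β m ((vψ c * vψ c' * vψ c - vψ c' * vψ c * vψ c') * ve i) (ve i)
  | brBak (c c' : Fin (n - 1)) (hcc : c'.1 = c.1 + 1) (i) (h1 : i.1 (lo c) = i.1 (hi c'))
      (h2 : qbak q (i.1 (lo c)) (i.1 (hi c))) :
      VRel p q n β m ((vψ c * vψ c' * vψ c - vψ c' * vψ c * vψ c') * ve i) (-ve i)
  | brDbl (c c' : Fin (n - 1)) (hcc : c'.1 = c.1 + 1) (i) (h1 : i.1 (lo c) = i.1 (hi c'))
      (h2 : qdbl q (i.1 (lo c)) (i.1 (hi c))) :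
      VRel p q n β m ((vψ c * vψ c' * vψ c - vψ c' * vψ c * vψ c') * ve i)
        ((vy (hi c') + vy (lo c) - vy (hi c) - vy (hi c)) * ve i)
  | brEls (c c' : Fin (n - 1)) (hcc : c'.1 = c.1 + 1) (i)
      (h : ¬(i.1 (lo c) = i.1 (hi c') ∧ (qarr q (i.1 (lo c)) (i.1 (hi c)) ∨
            qbak q (i.1 (lo c)) (i.1 (hi c)) ∨ qdbl q (i.1 (lo c)) (i.1 (hi c))))) :
      VRel p q n β m ((vψ c * vψ c' * vψ c - vψ c' * vψ c * vψ c') * ve i) 0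
  | psi0yNe (i) (h0 : 0 < n) (h : (i.1 ⟨0, h0⟩)⁻¹ ≠ i.1 ⟨0, h0⟩) :
      VRel p q n β m ((vψ0 * vy ⟨0, h0⟩ + vy ⟨0, h0⟩ * vψ0) * ve i) 0
  | psi0yEq (i) (h0 : 0 < n) (h : (i.1 ⟨0, h0⟩)⁻¹ = i.1 ⟨0, h0⟩) :
      VRel p q n β m ((vψ0 * vy ⟨0, h0⟩ + vy ⟨0, h0⟩ * vψ0) * ve i) (ve i + ve i)
  | psi0yO (k : Fin n) (h : k.1 ≠ 0) : VRel p q n β m (vψ0 * vy k) (vy k * vψ0)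
  | sq0Eq (i) (h0 : 0 < n) (h : (i.1 ⟨0, h0⟩)⁻¹ = i.1 ⟨0, h0⟩) :
      VRel p q n β m (vψ0 * vψ0 * ve i) 0
  | sq0Non (i) (h0 : 0 < n) (h : pnon p (i.1 ⟨0, h0⟩)) :
      VRel p q n β m (vψ0 * vψ0 * ve i) (ve i)
  | sq0Arr (i) (h0 : 0 < n) (h : parr p (i.1 ⟨0, h0⟩)) :
      VRel p q n β m (vψ0 * vψ0 * ve i) (vy ⟨0, h0⟩ * ve i)
  | sq0Bak (i) (h0 : 0 < n) (h : pbak p (i.1 ⟨0, h0⟩)) :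
      VRel p q n β m (vψ0 * vψ0 * ve i) (-(vy ⟨0, h0⟩ * ve i))
  | sq0Dbl (i) (h0 : 0 < n) (h : pdbl p (i.1 ⟨0, h0⟩)) :
      VRel p q n β m (vψ0 * vψ0 * ve i) (-(vy ⟨0, h0⟩ * (vy ⟨0, h0⟩ * ve i)))
  | fourA (i) (h2 : 1 < n) (h : c4a q (i.1 ⟨0, Nat.lt_of_succ_lt h2⟩) (i.1 ⟨1, h2⟩)) :
      VRel p q n β m (vfour h2 i) ((2 : K) • (vψ0 * ve i))
  | fourB (i) (h2 : 1 < n) (h : c4b q (i.1 ⟨0, Nat.lt_of_succ_lt h2⟩) (i.1 ⟨1, h2⟩)) :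
      VRel p q n β m (vfour h2 i) (-((2 : K) • (vψ0 * ve i)))
  | fourC (i) (h2 : 1 < n) (h : c4c q (i.1 ⟨0, Nat.lt_of_succ_lt h2⟩) (i.1 ⟨1, h2⟩)) :
      VRel p q n β m (vfour h2 i) ((4 : K) • ((vψ0 * vy ⟨0, Nat.lt_of_succ_lt h2⟩ - 1) * ve i))
  | fourD (i) (h2 : 1 < n) (h : c4d p (i.1 ⟨0, Nat.lt_of_succ_lt h2⟩) (i.1 ⟨1, h2⟩)) :
      VRel p q n β m (vfour h2 i) (-(vψ ⟨0, by omega⟩ * ve i))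
  | fourE (i) (h2 : 1 < n) (h : c4e p (i.1 ⟨0, Nat.lt_of_succ_lt h2⟩) (i.1 ⟨1, h2⟩)) :
      VRel p q n β m (vfour h2 i) (vψ ⟨0, by omega⟩ * ve i)
  | fourF (i) (h2 : 1 < n) (h : c4f p (i.1 ⟨0, Nat.lt_of_succ_lt h2⟩) (i.1 ⟨1, h2⟩)) :
      VRel p q n β m (vfour h2 i)
        (vψ ⟨0, by omega⟩ * ((vy ⟨0, Nat.lt_of_succ_lt h2⟩ - vy ⟨1, h2⟩) * ve i))
  | fourG (i) (h2 : 1 < n)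
      (h : ¬c4a q (i.1 ⟨0, Nat.lt_of_succ_lt h2⟩) (i.1 ⟨1, h2⟩) ∧
           ¬c4b q (i.1 ⟨0, Nat.lt_of_succ_lt h2⟩) (i.1 ⟨1, h2⟩) ∧
           ¬c4c q (i.1 ⟨0, Nat.lt_of_succ_lt h2⟩) (i.1 ⟨1, h2⟩) ∧
           ¬c4d p (i.1 ⟨0, Nat.lt_of_succ_lt h2⟩) (i.1 ⟨1, h2⟩) ∧
           ¬c4e p (i.1 ⟨0, Nat.lt_of_succ_lt h2⟩) (i.1 ⟨1, h2⟩) ∧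
           ¬c4f p (i.1 ⟨0, Nat.lt_of_succ_lt h2⟩) (i.1 ⟨1, h2⟩)) :
      VRel p q n β m (vfour h2 i) 0
  | cyc (i) (h0 : 0 < n) :
      VRel p q n β m (vy ⟨0, h0⟩ ^ m (i.1 ⟨0, h0⟩) * ve i) 0

/-- The cyclotomic quotient `V^β_{λ,m}` of the generalized Varagnolo–Vasserot algebra. -/
abbrev VB (p q : K) (n : ℕ) (β : Finset (Fin n → K)) (m : K →₀ ℕ) : Type :=
  RingQuot (VRel p q n β m)

/-! ### Laurent monomials and the intermediary algebras `𝕀_{N,A}` and `𝕀_N` -/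

/-- Given elements `X k` with formal inverses `Xi k`, the monomial `X^x` for `x ∈ ℤ^n`. -/
def XmonOf {F : Type} [Monoid F] (X Xi : Fin n → F) (x : Fin n → ℤ) : F :=
  ((List.finRange n).map fun k => if 0 ≤ x k then X k ^ (x k).toNat
    else Xi k ^ (-x k).toNat).prod

/-- The Laurent polynomial `(X^x - X^{x - tα})/(1 - X^{-α})` (a geometric sum). -/
def divMonOf {F : Type} [Ring F] (X Xi : Fin n → F) (x αv : Fin n → ℤ) (t : ℤ) : F :=
  if 0 ≤ t then ∑ j ∈ Finset.range t.toNat, XmonOf X Xi (x - (j : ℤ) • αv)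
  else -∑ j ∈ Finset.range (-t).toNat, XmonOf X Xi (x + ((j : ℤ) + 1) • αv)

/-- The root `α_b = ε_{b+1} - ε_b` as an exponent vector. -/
def alC (c : Fin (n - 1)) : Fin n → ℤ := fun k => if k = hi c then 1 else if k = lo c then -1 else 0

/-- The root `α_0 = 2ε_1` as an exponent vector. -/
def alB : Fin n → ℤ := fun k => if k.1 = 0 then 2 else 0

/-- Action of `r_0` on exponent vectors. -/
def rx0 (x : Fin n → ℤ) : Fin n → ℤ := fun k => if k.1 = 0 then -x k else x k

/-- Action of the simple transposition `r_{c+1}` on exponent vectors. -/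
def rxC (c : Fin (n - 1)) (x : Fin n → ℤ) : Fin n → ℤ := x ∘ Equiv.swap (lo c) (hi c)

/-- `-α_1` as an exponent vector (so `X^{-α_1} = X_1X_2⁻¹`). -/
def mA1 : Fin n → ℤ := fun k => if k.1 = 0 then 1 else if k.1 = 1 then -1 else 0
/-- `-r_0(α_1)` as an exponent vector (so `X^{-r_0(α_1)} = X_1⁻¹X_2⁻¹`). -/
def mR0A1 : Fin n → ℤ := fun k => if k.1 = 0 then -1 else if k.1 = 1 then -1 else 0
/-- `-r_1(α_0)` as an exponent vector (so `X^{-r_1(α_0)} = X_2⁻²`). -/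
def mR1A0 : Fin n → ℤ := fun k => if k.1 = 1 then -2 else 0
/-- `-α_0` as an exponent vector (so `X^{-α_0} = X_1⁻²`). -/
def mA0 : Fin n → ℤ := fun k => if k.1 = 0 then -2 else 0

/-- Generators of the intermediary algebra `𝕀_{N,A}` of Section 5 (restricted to type A). -/
inductive IAGen (K : Type) (n : ℕ) (α : Finset (Fin n → K)) : Type
  | phi : Fin (n - 1) → IAGen K n α
  | X : Fin n → IAGen K n α
  | Xinv : Fin n → IAGen K n α
  | e : {x // x ∈ α} → IAGen K n α

def tφ {α : Finset (Fin n → K)} (c : Fin (n - 1)) : FreeAlgebra K (IAGen K n α) :=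
  FreeAlgebra.ι K (IAGen.phi c)
def tX {α : Finset (Fin n → K)} (k : Fin n) : FreeAlgebra K (IAGen K n α) :=
  FreeAlgebra.ι K (IAGen.X k)
def tXi {α : Finset (Fin n → K)} (k : Fin n) : FreeAlgebra K (IAGen K n α) :=
  FreeAlgebra.ι K (IAGen.Xinv k)
def te {α : Finset (Fin n → K)} (i : {x // x ∈ α}) : FreeAlgebra K (IAGen K n α) :=
  FreeAlgebra.ι K (IAGen.e i)

/-- The "commutative part" of the relations of `𝕀_{N,A}`: relations among the `X`'s and
the idempotents `e(i)`, including the cyclotomic relation `(X_1 - i_1)^{m(i_1)}e(i) = 0`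
and the nilpotency relations `(X_k - i_k)^N e(i) = 0` for `k ≥ 2`. -/
inductive XARel (n : ℕ) (α : Finset (Fin n → K)) (m : K →₀ ℕ) (N : ℕ) :
    FreeAlgebra K (IAGen K n α) → FreeAlgebra K (IAGen K n α) → Prop
  | Xcomm (k l : Fin n) : XARel n α m N (tX k * tX l) (tX l * tX k)
  | Xunit (k : Fin n) : XARel n α m N (tX k * tXi k) 1
  | Xunit' (k : Fin n) : XARel n α m N (tXi k * tX k) 1
  | esum : XARel n α m N (∑ i ∈ α.attach, te i) 1
  | eidem (i) : XARel n α m N (te i * te i) (te i)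
  | eorth (i j) (h : i ≠ j) : XARel n α m N (te i * te j) 0
  | Xe (k : Fin n) (i) : XARel n α m N (tX k * te i) (te i * tX k)
  | cyc (i) (h0 : 0 < n) :
      XARel n α m N ((tX ⟨0, h0⟩ - algebraMap K (FreeAlgebra K (IAGen K n α)) (i.1 ⟨0, h0⟩)) ^
        m (i.1 ⟨0, h0⟩) * te i) 0
  | nil (i) (k : Fin n) (h : k.1 ≠ 0) :
      XARel n α m N ((tX k - algebraMap K (FreeAlgebra K (IAGen K n α)) (i.1 k)) ^ N * te i) 0

/-- Defining relations of the intermediary algebra `𝕀_{N,A}`.  Partial inverses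
`(⋯)⁻¹e(i)` appearing in the relations of Definition 5.1 are handled by quantifying over
all elements `Z` which invert the relevant denominator `e(i)`-locally, modulo the
commutative relations `XARel` (such a `Z` exists and its class is unique, by the
nilpotency relations). -/
inductive IARel (q : K) (n : ℕ) (α : Finset (Fin n → K)) (m : K →₀ ℕ) (N : ℕ) :
    FreeAlgebra K (IAGen K n α) → FreeAlgebra K (IAGen K n α) → Prop
  | ofX {a b : FreeAlgebra K (IAGen K n α)} (h : XARel n α m N a b) : IARel q n α m N a b
  | phiE (c : Fin (n - 1)) (i : {x // x ∈ α}) (h' : sw c i.1 ∈ α) :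
      IARel q n α m N (tφ c * te i) (te ⟨sw c i.1, h'⟩ * tφ c)
  | phiXne (c : Fin (n - 1)) (i) (x : Fin n → ℤ) (h : i.1 (lo c) ≠ i.1 (hi c)) :
      IARel q n α m N ((tφ c * XmonOf tX tXi x - XmonOf tX tXi (rxC c x) * tφ c) * te i) 0
  | phiXeq (c : Fin (n - 1)) (i) (x : Fin n → ℤ) (h : i.1 (lo c) = i.1 (hi c)) :
      IARel q n α m N ((tφ c * XmonOf tX tXi x - XmonOf tX tXi (rxC c x) * tφ c) * te i)
        ((q • (1 : FreeAlgebra K (IAGen K n α)) - q⁻¹ • XmonOf tX tXi (-alC c)) *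
          (divMonOf tX tXi x (alC c) (x (hi c) - x (lo c)) * te i))
  | phicomm (c c' : Fin (n - 1)) (h : c.1 + 1 < c'.1) :
      IARel q n α m N (tφ c * tφ c') (tφ c' * tφ c)
  | phisqEq (c : Fin (n - 1)) (i) (h : i.1 (lo c) = i.1 (hi c)) :
      IARel q n α m N (tφ c * tφ c * te i) ((q + q⁻¹) • (tφ c * te i))
  | phisqNe (c : Fin (n - 1)) (i) (h : i.1 (lo c) ≠ i.1 (hi c))
      (Z : FreeAlgebra K (IAGen K n α))
      (hZ : RingQuot.mkAlgHom K (XARel n α m N)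
          ((1 - XmonOf tX tXi (alC c)) * ((1 - XmonOf tX tXi (-alC c)) * (Z * te i))) =
        RingQuot.mkAlgHom K (XARel n α m N) (te i)) :
      IARel q n α m N (tφ c * tφ c * te i) (te i + ((q - q⁻¹) ^ 2) • (Z * te i))
  | phibrEq (c c' : Fin (n - 1)) (hcc : c'.1 = c.1 + 1) (i)
      (h1 : i.1 (lo c) = i.1 (hi c)) (h2 : i.1 (hi c) = i.1 (hi c')) :
      IARel q n α m N ((tφ c * tφ c' * tφ c - tφ c' * tφ c * tφ c') * te i)
        ((tφ c - tφ c') * te i)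
  | phibrNe (c c' : Fin (n - 1)) (hcc : c'.1 = c.1 + 1) (i)
      (h1 : i.1 (lo c) = i.1 (hi c')) (h2 : i.1 (lo c) ≠ i.1 (hi c))
      (Z : FreeAlgebra K (IAGen K n α))
      (hZ : RingQuot.mkAlgHom K (XARel n α m N)
          ((1 - XmonOf tX tXi (-alC c)) ^ 2 * ((1 - XmonOf tX tXi (-alC c')) ^ 2 * (Z * te i))) =
        RingQuot.mkAlgHom K (XARel n α m N) (te i)) :
      IARel q n α m N ((tφ c * tφ c' * tφ c - tφ c' * tφ c * tφ c') * te i)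
        (((q - q⁻¹) ^ 2) • ((XmonOf tX tXi (-alC c') - XmonOf tX tXi (-alC c)) *
          ((q • (1 : FreeAlgebra K (IAGen K n α)) - q⁻¹ • XmonOf tX tXi (-alC c - alC c')) *
            (Z * te i))))
  | phibrEls (c c' : Fin (n - 1)) (hcc : c'.1 = c.1 + 1) (i) (h : i.1 (lo c) ≠ i.1 (hi c')) :
      IARel q n α m N ((tφ c * tφ c' * tφ c - tφ c' * tφ c * tφ c') * te i) 0

/-- The intermediary algebra `𝕀_{N,A}`. -/
abbrev IA (q : K) (n : ℕ) (α : Finset (Fin n → K)) (m : K →₀ ℕ) (N : ℕ) : Type :=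
  RingQuot (IARel q n α m N)

/-- Generators of the intermediary algebra `𝕀_N` of Definition 5.1. -/
inductive IBGen (K : Type) (n : ℕ) (β : Finset (Fin n → K)) : Type
  | phi0 : IBGen K n β
  | phi : Fin (n - 1) → IBGen K n β
  | X : Fin n → IBGen K n β
  | Xinv : Fin n → IBGen K n β
  | e : {x // x ∈ β} → IBGen K n β

def uφ0 {β : Finset (Fin n → K)} : FreeAlgebra K (IBGen K n β) := FreeAlgebra.ι K IBGen.phi0
def uφ {β : Finset (Fin n → K)} (c : Fin (n - 1)) : FreeAlgebra K (IBGen K n β) :=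
  FreeAlgebra.ι K (IBGen.phi c)
def uX {β : Finset (Fin n → K)} (k : Fin n) : FreeAlgebra K (IBGen K n β) :=
  FreeAlgebra.ι K (IBGen.X k)
def uXi {β : Finset (Fin n → K)} (k : Fin n) : FreeAlgebra K (IBGen K n β) :=
  FreeAlgebra.ι K (IBGen.Xinv k)
def ue {β : Finset (Fin n → K)} (i : {x // x ∈ β}) : FreeAlgebra K (IBGen K n β) :=
  FreeAlgebra.ι K (IBGen.e i)

/-- The "commutative part" of the relations of `𝕀_N`. -/
inductive XBRel (n : ℕ) (β : Finset (Fin n → K)) (m : K →₀ ℕ) (N : ℕ) :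
    FreeAlgebra K (IBGen K n β) → FreeAlgebra K (IBGen K n β) → Prop
  | Xcomm (k l : Fin n) : XBRel n β m N (uX k * uX l) (uX l * uX k)
  | Xunit (k : Fin n) : XBRel n β m N (uX k * uXi k) 1
  | Xunit' (k : Fin n) : XBRel n β m N (uXi k * uX k) 1
  | esum : XBRel n β m N (∑ i ∈ β.attach, ue i) 1
  | eidem (i) : XBRel n β m N (ue i * ue i) (ue i)
  | eorth (i j) (h : i ≠ j) : XBRel n β m N (ue i * ue j) 0
  | Xe (k : Fin n) (i) : XBRel n β m N (uX k * ue i) (ue i * uX k)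
  | cyc (i) (h0 : 0 < n) :
      XBRel n β m N ((uX ⟨0, h0⟩ - algebraMap K (FreeAlgebra K (IBGen K n β)) (i.1 ⟨0, h0⟩)) ^
        m (i.1 ⟨0, h0⟩) * ue i) 0
  | nil (i) (k : Fin n) (h : k.1 ≠ 0) :
      XBRel n β m N ((uX k - algebraMap K (FreeAlgebra K (IBGen K n β)) (i.1 k)) ^ N * ue i) 0

/-- Case conditions for the modified four-term braid relation of Definition 5.1. -/
def ib4c1 (i1 i2 : K) : Prop := i1 = i2 ∧ i1 ^ 2 = 1 ∧ i2 ^ 2 = 1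
def ib4c2 (i1 i2 : K) : Prop := i1 ≠ i2 ∧ i1 ^ 2 = 1 ∧ i2 ^ 2 = 1
def ib4c3 (i1 i2 : K) : Prop := i1 ≠ i2 ∧ i1 ^ 2 ≠ 1 ∧ i2 ^ 2 = 1
def ib4c4 (i1 i2 : K) : Prop := i1 ≠ i2 ∧ i1 ^ 2 ≠ 1 ∧ i1⁻¹ = i2

/-- `(Φ_0Φ_1Φ_0Φ_1 - Φ_1Φ_0Φ_1Φ_0) e(i)`. -/
def ufour {β : Finset (Fin n → K)} (h2 : 1 < n) (i : {x // x ∈ β}) :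
    FreeAlgebra K (IBGen K n β) :=
  (uφ0 * uφ ⟨0, by omega⟩ * uφ0 * uφ ⟨0, by omega⟩ -
    uφ ⟨0, by omega⟩ * uφ0 * uφ ⟨0, by omega⟩ * uφ0) * ue i

/-- Defining relations of the intermediary algebra `𝕀_N` (Definition 5.1).  Partial
inverses `(⋯)⁻¹e(i)` are handled by quantifying over all local inverses `Z` modulo the
commutative relations `XBRel`; for the elements `Z_b`, `Y_0`, `Y_1` we use the
cancelled expressions (Z-Y) of Remark 5.3. -/
inductive IBRel (p q : K) (n : ℕ) (β : Finset (Fin n → K)) (m : K →₀ ℕ) (N : ℕ) :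
    FreeAlgebra K (IBGen K n β) → FreeAlgebra K (IBGen K n β) → Prop
  | ofX {a b : FreeAlgebra K (IBGen K n β)} (h : XBRel n β m N a b) : IBRel p q n β m N a b
  | phiE (c : Fin (n - 1)) (i : {x // x ∈ β}) (h' : sw c i.1 ∈ β) :
      IBRel p q n β m N (uφ c * ue i) (ue ⟨sw c i.1, h'⟩ * uφ c)
  | phi0E (i : {x // x ∈ β}) (h0 : 0 < n) (h' : invMove h0 i.1 ∈ β) :
      IBRel p q n β m N (uφ0 * ue i) (ue ⟨invMove h0 i.1, h'⟩ * uφ0)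
  | phiXne (c : Fin (n - 1)) (i) (x : Fin n → ℤ) (h : i.1 (lo c) ≠ i.1 (hi c)) :
      IBRel p q n β m N ((uφ c * XmonOf uX uXi x - XmonOf uX uXi (rxC c x) * uφ c) * ue i) 0
  | phiXeq (c : Fin (n - 1)) (i) (x : Fin n → ℤ) (h : i.1 (lo c) = i.1 (hi c)) :
      IBRel p q n β m N ((uφ c * XmonOf uX uXi x - XmonOf uX uXi (rxC c x) * uφ c) * ue i)
        ((q • (1 : FreeAlgebra K (IBGen K n β)) - q⁻¹ • XmonOf uX uXi (-alC c)) *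
          (divMonOf uX uXi x (alC c) (x (hi c) - x (lo c)) * ue i))
  | phi0Xne (i) (x : Fin n → ℤ) (h0 : 0 < n) (h : (i.1 ⟨0, h0⟩)⁻¹ ≠ i.1 ⟨0, h0⟩) :
      IBRel p q n β m N ((uφ0 * XmonOf uX uXi x - XmonOf uX uXi (rx0 x) * uφ0) * ue i) 0
  | phi0Xeq (i) (x : Fin n → ℤ) (h0 : 0 < n) (h : (i.1 ⟨0, h0⟩)⁻¹ = i.1 ⟨0, h0⟩) :
      IBRel p q n β m N ((uφ0 * XmonOf uX uXi x - XmonOf uX uXi (rx0 x) * uφ0) * ue i)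
        ((p • (1 : FreeAlgebra K (IBGen K n β)) - p⁻¹ • XmonOf uX uXi mA0) *
          (divMonOf uX uXi x alB (x ⟨0, h0⟩) * ue i))
  | phicomm (c c' : Fin (n - 1)) (h : c.1 + 1 < c'.1) :
      IBRel p q n β m N (uφ c * uφ c') (uφ c' * uφ c)
  | phi0comm (c : Fin (n - 1)) (h : 1 ≤ c.1) : IBRel p q n β m N (uφ0 * uφ c) (uφ c * uφ0)
  | phisqEq (c : Fin (n - 1)) (i) (h : i.1 (lo c) = i.1 (hi c)) :
      IBRel p q n β m N (uφ c * uφ c * ue i) ((q + q⁻¹) • (uφ c * ue i))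
  | phisqNe (c : Fin (n - 1)) (i) (h : i.1 (lo c) ≠ i.1 (hi c))
      (Z : FreeAlgebra K (IBGen K n β))
      (hZ : RingQuot.mkAlgHom K (XBRel n β m N)
          ((1 - XmonOf uX uXi (alC c)) * ((1 - XmonOf uX uXi (-alC c)) * (Z * ue i))) =
        RingQuot.mkAlgHom K (XBRel n β m N) (ue i)) :
      IBRel p q n β m N (uφ c * uφ c * ue i)
        ((q • (1 : FreeAlgebra K (IBGen K n β)) - q⁻¹ • XmonOf uX uXi (alC c)) *
          ((q • (1 : FreeAlgebra K (IBGen K n β)) - q⁻¹ • XmonOf uX uXi (-alC c)) *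
            (Z * ue i)))
  | phi0sqEq (i) (h0 : 0 < n) (h : (i.1 ⟨0, h0⟩)⁻¹ = i.1 ⟨0, h0⟩) :
      IBRel p q n β m N (uφ0 * uφ0 * ue i) ((p + p⁻¹) • (uφ0 * ue i))
  | phi0sqNe (i) (h0 : 0 < n) (h : (i.1 ⟨0, h0⟩)⁻¹ ≠ i.1 ⟨0, h0⟩)
      (Z : FreeAlgebra K (IBGen K n β))
      (hZ : RingQuot.mkAlgHom K (XBRel n β m N)
          ((1 - XmonOf uX uXi alB) * ((1 - XmonOf uX uXi mA0) * (Z * ue i))) =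
        RingQuot.mkAlgHom K (XBRel n β m N) (ue i)) :
      IBRel p q n β m N (uφ0 * uφ0 * ue i)
        ((p • (1 : FreeAlgebra K (IBGen K n β)) - p⁻¹ • XmonOf uX uXi alB) *
          ((p • (1 : FreeAlgebra K (IBGen K n β)) - p⁻¹ • XmonOf uX uXi mA0) *
            (Z * ue i)))
  | phibrEq (c c' : Fin (n - 1)) (hcc : c'.1 = c.1 + 1) (i)
      (h1 : i.1 (lo c) = i.1 (hi c)) (h2 : i.1 (hi c) = i.1 (hi c')) :
      IBRel p q n β m N ((uφ c * uφ c' * uφ c - uφ c' * uφ c * uφ c') * ue i)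
        ((uφ c - uφ c') * ue i)
  | phibrNe (c c' : Fin (n - 1)) (hcc : c'.1 = c.1 + 1) (i)
      (h1 : i.1 (lo c) = i.1 (hi c')) (h2 : i.1 (lo c) ≠ i.1 (hi c))
      (Z : FreeAlgebra K (IBGen K n β))
      (hZ : RingQuot.mkAlgHom K (XBRel n β m N)
          ((1 - XmonOf uX uXi (-alC c)) ^ 2 * ((1 - XmonOf uX uXi (-alC c')) ^ 2 * (Z * ue i))) =
        RingQuot.mkAlgHom K (XBRel n β m N) (ue i)) :
      IBRel p q n β m N ((uφ c * uφ c' * uφ c - uφ c' * uφ c * uφ c') * ue i)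
        (((q - q⁻¹) ^ 2) • ((XmonOf uX uXi (-alC c') - XmonOf uX uXi (-alC c)) *
          ((q • (1 : FreeAlgebra K (IBGen K n β)) - q⁻¹ • XmonOf uX uXi (-alC c - alC c')) *
            (Z * ue i))))
  | phibrEls (c c' : Fin (n - 1)) (hcc : c'.1 = c.1 + 1) (i) (h : i.1 (lo c) ≠ i.1 (hi c')) :
      IBRel p q n β m N ((uφ c * uφ c' * uφ c - uφ c' * uφ c * uφ c') * ue i) 0
  | four1 (i) (h2 : 1 < n) (h : ib4c1 (i.1 ⟨0, Nat.lt_of_succ_lt h2⟩) (i.1 ⟨1, h2⟩)) :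
      IBRel p q n β m N (ufour h2 i)
        ((p * q⁻¹ + p⁻¹ * q) • ((uφ0 * uφ ⟨0, by omega⟩ - uφ ⟨0, by omega⟩ * uφ0) * ue i))
  | four2 (i) (h2 : 1 < n) (h : ib4c2 (i.1 ⟨0, Nat.lt_of_succ_lt h2⟩) (i.1 ⟨1, h2⟩))
      (Z : FreeAlgebra K (IBGen K n β))
      (hZ : RingQuot.mkAlgHom K (XBRel n β m N)
          ((1 - XmonOf uX uXi mA1) ^ 2 * ((1 - XmonOf uX uXi mR0A1) ^ 2 * (Z * ue i))) =
        RingQuot.mkAlgHom K (XBRel n β m N) (ue i)) :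
      IBRel p q n β m N (ufour h2 i)
        (-(((q - q⁻¹) ^ 2) •
          ((uφ0 * (1 - XmonOf uX uXi mA0) -
              (p • (1 : FreeAlgebra K (IBGen K n β)) - p⁻¹ • XmonOf uX uXi mA0)) *
            (XmonOf uX uXi mA1 *
              ((p • (1 : FreeAlgebra K (IBGen K n β)) - p⁻¹ • XmonOf uX uXi mR1A0) *
                (Z * ue i))))))
  | four3 (i) (h2 : 1 < n) (h : ib4c3 (i.1 ⟨0, Nat.lt_of_succ_lt h2⟩) (i.1 ⟨1, h2⟩))
      (Z : FreeAlgebra K (IBGen K n β))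
      (hZ : RingQuot.mkAlgHom K (XBRel n β m N)
          ((1 - XmonOf uX uXi mA1) ^ 2 * ((1 - XmonOf uX uXi mR0A1) ^ 2 * (Z * ue i))) =
        RingQuot.mkAlgHom K (XBRel n β m N) (ue i)) :
      IBRel p q n β m N (ufour h2 i)
        (-(((q - q⁻¹) ^ 2) •
          (uφ0 * ((1 - XmonOf uX uXi mA0) *
            (XmonOf uX uXi mA1 *
              ((p • (1 : FreeAlgebra K (IBGen K n β)) - p⁻¹ • XmonOf uX uXi mR1A0) *
                (Z * ue i)))))))
  | four4 (i) (h2 : 1 < n) (h : ib4c4 (i.1 ⟨0, Nat.lt_of_succ_lt h2⟩) (i.1 ⟨1, h2⟩))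
      (Z : FreeAlgebra K (IBGen K n β))
      (hZ : RingQuot.mkAlgHom K (XBRel n β m N)
          ((1 - XmonOf uX uXi mA0) ^ 2 * ((1 - XmonOf uX uXi mR1A0) ^ 2 * (Z * ue i))) =
        RingQuot.mkAlgHom K (XBRel n β m N) (ue i)) :
      IBRel p q n β m N (ufour h2 i)
        (((p - p⁻¹) ^ 2) •
          (uφ ⟨0, by omega⟩ * ((1 - XmonOf uX uXi mA1) *
            (XmonOf uX uXi mA0 * ((1 + XmonOf uX uXi mA1) *
              ((1 + XmonOf uX uXi mR0A1) *
                ((q • (1 : FreeAlgebra K (IBGen K n β)) - q⁻¹ • XmonOf uX uXi mR0A1) *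
                  (Z * ue i))))))))
  | four5 (i) (h2 : 1 < n)
      (h : ¬ib4c1 (i.1 ⟨0, Nat.lt_of_succ_lt h2⟩) (i.1 ⟨1, h2⟩) ∧
           ¬ib4c2 (i.1 ⟨0, Nat.lt_of_succ_lt h2⟩) (i.1 ⟨1, h2⟩) ∧
           ¬ib4c3 (i.1 ⟨0, Nat.lt_of_succ_lt h2⟩) (i.1 ⟨1, h2⟩) ∧
           ¬ib4c4 (i.1 ⟨0, Nat.lt_of_succ_lt h2⟩) (i.1 ⟨1, h2⟩)) :
      IBRel p q n β m N (ufour h2 i) 0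

/-- The intermediary algebra `𝕀_N` of Definition 5.1. -/
abbrev IB (p q : K) (n : ℕ) (β : Finset (Fin n → K)) (m : K →₀ ℕ) (N : ℕ) : Type :=
  RingQuot (IBRel p q n β m N)

/-! ### Formal power series helpers -/

/-- Composition `f ∘ g` of univariate power series (intended for `g` with zero constant
term, in which case this is the substitution of `g` into `f`). -/
def comp1 (f g : PowerSeries K) : PowerSeries K :=
  PowerSeries.mk fun d => ∑ k ∈ Finset.range (d + 1),
    PowerSeries.coeff (R := K) k f * PowerSeries.coeff (R := K) d (g ^ k)

/-- The power series `f(z) = z + z/(1-z)` used for the type B isomorphism. -/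
def fVV : PowerSeries K := PowerSeries.X + PowerSeries.X * (1 - PowerSeries.X)⁻¹

/-- The embedding `K[[z]] → K[[y_1,…,y_n]]`, `z ↦ y_a`. -/
def emb1 (a : Fin n) (h : PowerSeries K) : MvPowerSeries (Fin n) K :=
  fun d => if d.support ⊆ {a} then PowerSeries.coeff (R := K) (d a) h else 0

/-- The embedding `K[[z,z']] → K[[y_1,…,y_n]]`, `z ↦ y_a`, `z' ↦ y_b` (for `a ≠ b`). -/
def emb2 (a b : Fin n) (P : MvPowerSeries (Fin 2) K) : MvPowerSeries (Fin n) K :=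
  fun d => if d.support ⊆ {a, b} then
    MvPowerSeries.coeff (R := K) (Finsupp.single 0 (d a) + Finsupp.single 1 (d b)) P else 0

/-- The action of a permutation of the variables on `K[[y_1,…,y_n]]`. -/
def permPS (σ : Equiv.Perm (Fin n)) (P : MvPowerSeries (Fin n) K) :
    MvPowerSeries (Fin n) K :=
  fun d => MvPowerSeries.coeff (R := K) (Finsupp.equivMapDomain σ d) P

/-- The action of `r_0` (`y_1 ↦ -y_1`) on `K[[y_1,…,y_n]]`. -/
def negFirst (h0 : 0 < n) (P : MvPowerSeries (Fin n) K) : MvPowerSeries (Fin n) K :=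
  fun d => (-1 : K) ^ d ⟨0, h0⟩ * MvPowerSeries.coeff (R := K) d P

/-- `X_k(i) = i_k (1 - g(y_k))` as an element of `K[[y_1,…,y_n]]`. -/
def XofI (g : PowerSeries K) (i : Fin n → K) (k : Fin n) : MvPowerSeries (Fin n) K :=
  MvPowerSeries.C (σ := Fin n) (R := K) (i k) * (1 - emb1 k g)

/-- `X̄_1(i) = X_1(i)⁻¹ = i_1⁻¹ (1 - g(y_1))⁻¹`. -/
def XbarofI (g : PowerSeries K) (i : Fin n → K) (h0 : 0 < n) : MvPowerSeries (Fin n) K :=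
  MvPowerSeries.C (σ := Fin n) (R := K) (i ⟨0, h0⟩)⁻¹ * (1 - emb1 ⟨0, h0⟩ g)⁻¹

/-- The evaluated series `Q_k(i) ∈ K[[y_k, y_{k+1}]] ⊆ K[[y_1,…,y_n]]`. -/
def Qev {n : ℕ} (Q : Fin (n - 1) → K → K → MvPowerSeries (Fin 2) K)
    (c : Fin (n - 1)) (i : Fin n → K) : MvPowerSeries (Fin n) K :=
  emb2 (lo c) (hi c) (Q c (i (lo c)) (i (hi c)))

/-- Condition (★1). -/
def Star1 (q : K) (g : PowerSeries K) (S : Set K) (n : ℕ)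
    (Q : Fin (n - 1) → K → K → MvPowerSeries (Fin 2) K) : Prop :=
  ∀ i : Fin n → K, (∀ k, i k ∈ S) → ∀ c : Fin (n - 1), i (lo c) = i (hi c) →
    Qev Q c i * (emb1 (hi c) g - emb1 (lo c) g) =
      MvPowerSeries.C (σ := Fin n) (R := K) (i (lo c))⁻¹ *
        ((MvPowerSeries.C (σ := Fin n) (R := K) q⁻¹ * XofI g i (lo c) -
            MvPowerSeries.C (σ := Fin n) (R := K) q * XofI g i (hi c)) *
          (MvPowerSeries.X (hi c) - MvPowerSeries.X (lo c)))

/-- The product `{}^{r_k}Q_k(r_k(i)) ⋅ Q_k(i)`. -/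
def QQ2 {n : ℕ} (Q : Fin (n - 1) → K → K → MvPowerSeries (Fin 2) K)
    (c : Fin (n - 1)) (i : Fin n → K) : MvPowerSeries (Fin n) K :=
  permPS (Equiv.swap (lo c) (hi c)) (Qev Q c (sw c i)) * Qev Q c i

/-- `(X_k(i) - X_{k+1}(i))(X_{k+1}(i) - X_k(i))`. -/
def DD2 (g : PowerSeries K) (i : Fin n → K) (c : Fin (n - 1)) : MvPowerSeries (Fin n) K :=
  (XofI g i (lo c) - XofI g i (hi c)) * (XofI g i (hi c) - XofI g i (lo c))

/-- `(qX_k(i) - q⁻¹X_{k+1}(i))(qX_{k+1}(i) - q⁻¹X_k(i))`. -/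
def NN2 (q : K) (g : PowerSeries K) (i : Fin n → K) (c : Fin (n - 1)) :
    MvPowerSeries (Fin n) K :=
  (MvPowerSeries.C (σ := Fin n) (R := K) q * XofI g i (lo c) -
      MvPowerSeries.C (σ := Fin n) (R := K) q⁻¹ * XofI g i (hi c)) *
    (MvPowerSeries.C (σ := Fin n) (R := K) q * XofI g i (hi c) -
      MvPowerSeries.C (σ := Fin n) (R := K) q⁻¹ * XofI g i (lo c))

/-- Condition (★2). -/
def Star2 (q : K) (g : PowerSeries K) (S : Set K) (n : ℕ)
    (Q : Fin (n - 1) → K → K → MvPowerSeries (Fin 2) K) : Prop :=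
  ∀ i : Fin n → K, (∀ k, i k ∈ S) → ∀ c : Fin (n - 1),
    (qnon q (i (lo c)) (i (hi c)) → QQ2 Q c i * DD2 g i c = NN2 q g i c) ∧
    (qbak q (i (lo c)) (i (hi c)) →
      QQ2 Q c i * ((MvPowerSeries.X (hi c) - MvPowerSeries.X (lo c)) * DD2 g i c) =
        NN2 q g i c) ∧
    (qarr q (i (lo c)) (i (hi c)) →
      QQ2 Q c i * ((MvPowerSeries.X (lo c) - MvPowerSeries.X (hi c)) * DD2 g i c) =
        NN2 q g i c) ∧
    (qdbl q (i (lo c)) (i (hi c)) →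
      QQ2 Q c i * ((MvPowerSeries.X (hi c) - MvPowerSeries.X (lo c)) *
        ((MvPowerSeries.X (lo c) - MvPowerSeries.X (hi c)) * DD2 g i c)) = NN2 q g i c)

/-- Condition (★3). -/
def Star3 (S : Set K) (n : ℕ)
    (Q : Fin (n - 1) → K → K → MvPowerSeries (Fin 2) K) : Prop :=
  ∀ i : Fin n → K, (∀ k, i k ∈ S) → ∀ c c' : Fin (n - 1), c'.1 = c.1 + 1 →
    permPS (Equiv.swap (lo c) (hi c)) (Qev Q c' (sw c' (sw c i))) =
      permPS (Equiv.swap (lo c') (hi c')) (Qev Q c (sw c (sw c' i)))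

/-- Condition (★4). -/
def Star4 (p : K) (g : PowerSeries K) (S : Set K) (n : ℕ) (Q0 : K → PowerSeries K) : Prop :=
  ∀ i : Fin n → K, (∀ k, i k ∈ S) → ∀ h0 : 0 < n, (i ⟨0, h0⟩)⁻¹ = i ⟨0, h0⟩ →
    emb1 ⟨0, h0⟩ (Q0 (i ⟨0, h0⟩)) =
      MvPowerSeries.C (σ := Fin n) (R := K) (i ⟨0, h0⟩)⁻¹ *
        (MvPowerSeries.C (σ := Fin n) (R := K) p⁻¹ * XbarofI g i h0 -
          MvPowerSeries.C (σ := Fin n) (R := K) p * XofI g i ⟨0, h0⟩)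

/-- The product `{}^{r_0}Q_0(r_0(i)) ⋅ Q_0(i)`. -/
def QQ0 {n : ℕ} (Q0 : K → PowerSeries K) (h0 : 0 < n) (i : Fin n → K) :
    MvPowerSeries (Fin n) K :=
  negFirst h0 (emb1 ⟨0, h0⟩ (Q0 (i ⟨0, h0⟩)⁻¹)) * emb1 ⟨0, h0⟩ (Q0 (i ⟨0, h0⟩))

/-- `(X̄_1(i) - X_1(i))(X_1(i) - X̄_1(i))`. -/
def DD0 (g : PowerSeries K) (h0 : 0 < n) (i : Fin n → K) : MvPowerSeries (Fin n) K :=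
  (XbarofI g i h0 - XofI g i ⟨0, h0⟩) * (XofI g i ⟨0, h0⟩ - XbarofI g i h0)

/-- `(pX̄_1(i) - p⁻¹X_1(i))(pX_1(i) - p⁻¹X̄_1(i))`. -/
def NN0 (p : K) (g : PowerSeries K) (h0 : 0 < n) (i : Fin n → K) :
    MvPowerSeries (Fin n) K :=
  (MvPowerSeries.C (σ := Fin n) (R := K) p * XbarofI g i h0 -
      MvPowerSeries.C (σ := Fin n) (R := K) p⁻¹ * XofI g i ⟨0, h0⟩) *
    (MvPowerSeries.C (σ := Fin n) (R := K) p * XofI g i ⟨0, h0⟩ -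
      MvPowerSeries.C (σ := Fin n) (R := K) p⁻¹ * XbarofI g i h0)

/-- Condition (★5). -/
def Star5 (p : K) (g : PowerSeries K) (S : Set K) (n : ℕ) (Q0 : K → PowerSeries K) : Prop :=
  ∀ i : Fin n → K, (∀ k, i k ∈ S) → ∀ h0 : 0 < n,
    (pnon p (i ⟨0, h0⟩) → QQ0 Q0 h0 i * DD0 g h0 i = NN0 p g h0 i) ∧
    (parr p (i ⟨0, h0⟩) →
      QQ0 Q0 h0 i * (MvPowerSeries.X ⟨0, h0⟩ * DD0 g h0 i) = NN0 p g h0 i) ∧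
    (pbak p (i ⟨0, h0⟩) →
      QQ0 Q0 h0 i * (-MvPowerSeries.X ⟨0, h0⟩ * DD0 g h0 i) = NN0 p g h0 i) ∧
    (pdbl p (i ⟨0, h0⟩) →
      QQ0 Q0 h0 i * (-(MvPowerSeries.X ⟨0, h0⟩ * MvPowerSeries.X ⟨0, h0⟩) * DD0 g h0 i) =
        NN0 p g h0 i)

/-- Condition (★6). -/
def Star6 (S : Set K) (n : ℕ) (Q0 : K → PowerSeries K)
    (Q : Fin (n - 1) → K → K → MvPowerSeries (Fin 2) K) : Prop :=
  ∀ i : Fin n → K, (∀ k, i k ∈ S) → ∀ h2 : 1 < n,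
    (permPS (Equiv.swap ⟨0, Nat.lt_of_succ_lt h2⟩ ⟨1, h2⟩)
        (negFirst (Nat.lt_of_succ_lt h2)
          (permPS (Equiv.swap ⟨0, Nat.lt_of_succ_lt h2⟩ ⟨1, h2⟩)
            (emb1 ⟨0, Nat.lt_of_succ_lt h2⟩ (Q0 (i ⟨0, Nat.lt_of_succ_lt h2⟩))))) =
      emb1 ⟨0, Nat.lt_of_succ_lt h2⟩ (Q0 (i ⟨0, Nat.lt_of_succ_lt h2⟩))) ∧
    (negFirst (Nat.lt_of_succ_lt h2)
        (permPS (Equiv.swap ⟨0, Nat.lt_of_succ_lt h2⟩ ⟨1, h2⟩)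
          (negFirst (Nat.lt_of_succ_lt h2)
            (Qev Q ⟨0, by omega⟩
              (invMove (Nat.lt_of_succ_lt h2)
                (sw ⟨0, by omega⟩ (invMove (Nat.lt_of_succ_lt h2) i)))))) =
      Qev Q ⟨0, by omega⟩ i)

/-! ### Dimension vectors -/

/-- The dimension vector attached to a tuple: `dimvec i s = #{k : i_k ∈ {s, s⁻¹}}`. -/
def dimvec (i : Fin n → K) : K → ℕ := fun s =>
  (Finset.univ.filter fun k => i k = s ∨ i k = s⁻¹).card

end PdAW

end
namespace PdAW

/-!
`σ` kills the cyclotomic relation, since `(X_1 - i_1)^{m(i_1)} e(i) = 0` in `𝕀_N` and the `e(i)`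
sum to `1`. The image of the spectral idempotent `e^H(i)` is then `e(i)`: generalized
eigenspaces of `X_k` for distinct eigenvalues are orthogonal (Bézout for the coprime
polynomials `(X - s)^M` and `(X - t)^M'`), and both families sum to `1`. So `σ` sends `e_β`
to `1` and descends to the corner. Local inverses `(1 - X^{-α})⁻¹ e(i)` are unique, so `ρ` and
the descended map exchange them, and both composites fix every generator.
-/

section General

variable {K A : Type} [Field K] [Ring A] [Algebra K A]

theorem mul_eq_zero_of_sub_pow_mul_eq_zero {x e u : A} {s t : K} (hst : s ≠ t)
    (hxe : Commute x e) {M M' : ℕ} (he : (x - algebraMap K A s) ^ M * e = 0)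
    (hu : (x - algebraMap K A t) ^ M' * u = 0) : e * u = 0 := by
  obtain ⟨f, g, hfg⟩ : IsCoprime ((Polynomial.X - Polynomial.C s) ^ M)
      ((Polynomial.X - Polynomial.C t) ^ M') :=
    (Polynomial.isCoprime_X_sub_C_of_isUnit_sub (sub_ne_zero.mpr hst).isUnit).pow
  have hbez := congrArg (Polynomial.aeval x) hfg
  simp only [map_add, map_mul, map_pow, map_sub, Polynomial.aeval_X, Polynomial.aeval_C,
    map_one] at hbez
  have hte : Commute ((x - algebraMap K A t) ^ M') e :=
    (hxe.sub_left (Algebra.commutes t e)).pow_left M'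
  calc e * u = (Polynomial.aeval x f * (x - algebraMap K A s) ^ M +
        Polynomial.aeval x g * (x - algebraMap K A t) ^ M') * (e * u) := by rw [hbez, one_mul]
    _ = 0 := by
      rw [add_mul, mul_assoc, ← mul_assoc _ e, he, mul_assoc, ← mul_assoc _ e, hte.eq,
        mul_assoc e, hu]
      simp

theorem polyProd_map {B : Type} [Ring B] [Algebra K B] (φ : A →ₐ[K] B) (x : A) (I : Finset K)
    (m : K → ℕ) : φ (polyProd x I m) = polyProd (φ x) I m := by
  unfold polyProd
  refine (Finset.map_noncommProd I _ _ φ).trans ?_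
  exact Finset.noncommProd_congr rfl (fun _ _ => by rw [map_pow, map_sub, AlgHom.commutes]) _

theorem polyProd_support_mul_eq_zero {x e : A} {m : K →₀ ℕ} {s : K}
    (h : (x - algebraMap K A s) ^ m s * e = 0) : polyProd x m.support m * e = 0 := by
  by_cases hs : s ∈ m.support
  · obtain ⟨y, hy⟩ : ∃ y, polyProd x m.support m = y * (x - algebraMap K A s) ^ m s :=
      ⟨_, (Finset.noncommProd_erase_mul _ hs _ _).symm⟩
    rw [hy, mul_assoc, h, mul_zero]
  · rw [Finsupp.notMem_support_iff.mp hs, pow_zero, one_mul] at h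
    rw [h, mul_zero]

theorem local_inverse_unique {M : Type} [Monoid M] {e a c d : M} (hc : c * a = e)
    (hce : c * e = c) (hd : d * a = e) (hed : e * d = d) (had : Commute a d) : c = d := calc
  c = c * (d * a) := by rw [hd, hce]
  _ = e * d := by rw [← had.eq, ← mul_assoc, hc]
  _ = d := hed

theorem map_eq_of_local_inverse {M M' : Type} [Monoid M] [Monoid M'] {F : Type} [FunLike F M M']
    [MonoidHomClass F M M'] (f : F) {e a c : M} {e' a' d : M'} (hc : c * a = e)
    (hce : c * e = c) (hd : d * a' = e') (hed : e' * d = d) (had : Commute a' d)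
    (ha : f a = a') (he : f e = e') : f c = d :=
  local_inverse_unique (by rw [← ha, ← he, ← map_mul, hc]) (by rw [← he, ← map_mul, hce])
    hd hed had

theorem map_eq_of_mul_eq_one {M M' : Type} [Monoid M] [Monoid M'] {F : Type} [FunLike F M M']
    [MonoidHomClass F M M'] (f : F) {x y : M} {x' y' : M'} (hx : f x = x') (hyx : y * x = 1)
    (hxy' : x' * y' = 1) : f y = y' :=
  left_inv_eq_right_inv (hx ▸ map_mul_eq_one f hyx) hxy'

theorem Commute.of_mul_eq_one {M : Type} [Monoid M] {a x y : M} (h : Commute a x)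
    (hxy : x * y = 1) (hyx : y * x = 1) : Commute a y :=
  h.units_inv_right (u := ⟨x, y, hxy, hyx⟩)

theorem map_sum_ite_smul {B ι : Type} [Ring B] [Algebra K B] (f : A →ₐ[K] B) (s : Finset ι)
    (P : ι → Prop) [DecidablePred P] (r : K) {x : ι → A} {y : ι → B}
    (h : ∀ i, P i → f (x i) = y i) :
    f (∑ i ∈ s, if P i then r • x i else 0) = ∑ i ∈ s, if P i then r • y i else 0 := by
  rw [map_sum]
  refine Finset.sum_congr rfl fun i _ => ?_
  split_ifs with hi
  · rw [map_smul, h i hi]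
  · exact map_zero f

theorem mkAlgHom_sub_pow_mul_eq_zero {s : A → A → Prop} {x e : A} {c : K} {M : ℕ}
    (h : s ((x - algebraMap K A c) ^ M * e) 0) :
    (RingQuot.mkAlgHom K s x - algebraMap K _ c) ^ M * RingQuot.mkAlgHom K s e = 0 := by
  rw [← AlgHom.commutes (RingQuot.mkAlgHom K s) c, ← map_sub, ← map_pow, ← map_mul,
    RingQuot.mkAlgHom_rel K h, map_zero]

noncomputable def cornerLift {B : Type} [Ring B] [Algebra K B] (e : A) (f : A →ₐ[K] B)
    (hf : f e = 1) : Corner A e →ₐ[K] B :=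
  RingQuot.liftAlgHom K ⟨f, by rintro x y ⟨rfl, rfl⟩; rw [hf, map_one]⟩

theorem cornerLift_cornerMk {B : Type} [Ring B] [Algebra K B] (e : A) (f : A →ₐ[K] B)
    (hf : f e = 1) (x : A) : cornerLift e f hf (cornerMk (K := K) e x) = f x :=
  RingQuot.liftAlgHom_mkAlgHom_apply K f _ x

end General

section Spectral

variable {K A B : Type} [Field K] [Ring A] [Algebra K A] [Ring B] [Algebra K B] {n : ℕ}
  {Xs : Fin n → A} {T : Finset (Fin n → K)} {E : (Fin n → K) → A}
  {β : Finset (Fin n → K)} {e : {x // x ∈ β} → B}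

theorem IsSpectralFamily.mul_map_eq_zero (hE : IsSpectralFamily Xs T E) (f : A →ₐ[K] B)
    (hcomm : ∀ i k, Commute (f (Xs k)) (e i))
    (hnil : ∀ i k, ∃ M, (f (Xs k) - algebraMap K B (i.1 k)) ^ M * e i = 0)
    {i : {x // x ∈ β}} {j : Fin n → K} (hij : i.1 ≠ j) : e i * f (E j) = 0 := by
  obtain ⟨hzero, -, -, -, -, hnilE⟩ := hE
  by_cases hj : j ∈ T
  · obtain ⟨k, hk⟩ := Function.ne_iff.mp hij
    obtain ⟨M, hM⟩ := hnil i k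
    obtain ⟨M', -, hM'⟩ := hnilE j hj k
    refine mul_eq_zero_of_sub_pow_mul_eq_zero hk (hcomm i k) hM (M' := M') ?_
    simpa using congrArg f hM'
  · rw [hzero j hj, map_zero, mul_zero]

theorem IsSpectralFamily.map_eq (hE : IsSpectralFamily Xs T E) (f : A →ₐ[K] B)
    (hsum : ∑ i ∈ β.attach, e i = 1) (hcomm : ∀ i k, Commute (f (Xs k)) (e i))
    (hnil : ∀ i k, ∃ M, (f (Xs k) - algebraMap K B (i.1 k)) ^ M * e i = 0)
    (i : {x // x ∈ β}) : f (E i.1) = e i := by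
  have horth : ∀ {i : {x // x ∈ β}} {j}, i.1 ≠ j → e i * f (E j) = 0 :=
    hE.mul_map_eq_zero f hcomm hnil
  have hleft : f (E i.1) = e i * f (E i.1) := calc
    f (E i.1) = (∑ j ∈ β.attach, e j) * f (E i.1) := by rw [hsum, one_mul]
    _ = e i * f (E i.1) := by
      rw [Finset.sum_mul, Finset.sum_eq_single i
        (fun j _ hji => horth (Subtype.coe_ne_coe.mpr hji))
        (fun h => (h (Finset.mem_attach β i)).elim)]
  have hsumT : ∑ j ∈ T, f (E j) = 1 := by rw [← map_sum, hE.2.1, map_one]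
  by_cases hi : i.1 ∈ T
  · calc f (E i.1) = e i * f (E i.1) := hleft
      _ = e i * ∑ j ∈ T, f (E j) := by
        rw [Finset.mul_sum,
          Finset.sum_eq_single_of_mem i.1 hi (fun j _ hji => horth (Ne.symm hji))]
      _ = e i := by rw [hsumT, mul_one]
  · have hei : e i = 0 := by
      rw [← mul_one (e i), ← hsumT, Finset.mul_sum]
      exact Finset.sum_eq_zero fun j hj => horth (fun h => hi (h ▸ hj))
    rw [hE.1 _ hi, map_zero, hei]

end Spectral

section Presentations

variable {K : Type} [Field K] {p q : K} {n : ℕ}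

theorem HeckeB.bXi_mul_bX (k : Fin n) :
    RingQuot.mkAlgHom K (HBRel p q n) (bXi k) * RingQuot.mkAlgHom K (HBRel p q n) (bX k) = 1 := by
  rw [← map_mul, RingQuot.mkAlgHom_rel K (HBRel.Xunit' k), map_one]

variable {m : K →₀ ℕ}

theorem HeckeBc.bX_mul_bXi (k : Fin n) :
    RingQuot.mkAlgHom K (HBcRel p q n m) (bX k) * RingQuot.mkAlgHom K (HBcRel p q n m) (bXi k) =
      1 := by
  rw [← map_mul, RingQuot.mkAlgHom_rel K (HBcRel.ofB (HBRel.Xunit k)), map_one]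

theorem HeckeBc.bXi_mul_bX (k : Fin n) :
    RingQuot.mkAlgHom K (HBcRel p q n m) (bXi k) * RingQuot.mkAlgHom K (HBcRel p q n m) (bX k) =
      1 := by
  rw [← map_mul, RingQuot.mkAlgHom_rel K (HBcRel.ofB (HBRel.Xunit' k)), map_one]

noncomputable def liftCyclotomic {B : Type} [Ring B] [Algebra K B] (σ : HeckeB p q n →ₐ[K] B)
    (hσ : ∀ h0 : 0 < n,
      polyProd (σ (RingQuot.mkAlgHom K (HBRel p q n) (bX ⟨0, h0⟩))) m.support m = 0) :
    HeckeBc p q n m →ₐ[K] B :=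
  RingQuot.liftAlgHom K ⟨σ.comp (RingQuot.mkAlgHom K (HBRel p q n)), fun x y h => by
    cases h with
    | ofB h => exact congrArg σ (RingQuot.mkAlgHom_rel K h)
    | cyc h0 => rw [AlgHom.comp_apply, polyProd_map, polyProd_map, hσ h0, map_zero]⟩

theorem liftCyclotomic_mk {B : Type} [Ring B] [Algebra K B] (σ : HeckeB p q n →ₐ[K] B)
    (hσ : ∀ h0 : 0 < n,
      polyProd (σ (RingQuot.mkAlgHom K (HBRel p q n) (bX ⟨0, h0⟩))) m.support m = 0)
    (a : FreeAlgebra K (BGen n)) :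
    liftCyclotomic σ hσ (RingQuot.mkAlgHom K (HBcRel p q n m) a) =
      σ (RingQuot.mkAlgHom K (HBRel p q n) a) :=
  RingQuot.liftAlgHom_mkAlgHom_apply K _ _ a

theorem Corner.heckeBc_algHom_ext {B : Type} [Ring B] [Algebra K B] {e : HeckeBc p q n m}
    {f g : Corner (HeckeBc p q n m) e →ₐ[K] B}
    (hX : ∀ k, f (cornerMk (K := K) e (RingQuot.mkAlgHom K _ (bX k))) =
      g (cornerMk (K := K) e (RingQuot.mkAlgHom K _ (bX k))))
    (hg : ∀ b, f (cornerMk (K := K) e (RingQuot.mkAlgHom K _ (bg b))) =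
      g (cornerMk (K := K) e (RingQuot.mkAlgHom K _ (bg b))))
    (hg0 : f (cornerMk (K := K) e (RingQuot.mkAlgHom K _ bg0)) =
      g (cornerMk (K := K) e (RingQuot.mkAlgHom K _ bg0))) :
    f = g := by
  refine RingQuot.ringQuot_ext' K _ _ (RingQuot.ringQuot_ext' K _ _ (FreeAlgebra.hom_ext ?_))
  funext x
  cases x with
  | g0 => exact hg0
  | g b => exact hg b
  | X k => exact hX k
  | Xinv k =>
    refine left_inv_eq_right_inv (a := f (cornerMk (K := K) e (RingQuot.mkAlgHom K _ (bX k)))) ?_ ?_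
    · exact map_mul_eq_one f (map_mul_eq_one _ (HeckeBc.bXi_mul_bX k))
    · exact hX k ▸ map_mul_eq_one g (map_mul_eq_one _ (HeckeBc.bX_mul_bXi k))

variable {β : Finset (Fin n → K)} {N : ℕ}

theorem IB.uX_mul_uXi (k : Fin n) :
    RingQuot.mkAlgHom K (IBRel p q n β m N) (uX k) * RingQuot.mkAlgHom K _ (uXi k) = 1 := by
  rw [← map_mul, RingQuot.mkAlgHom_rel K (IBRel.ofX (XBRel.Xunit k)), map_one]

theorem IB.uXi_mul_uX (k : Fin n) :
    RingQuot.mkAlgHom K (IBRel p q n β m N) (uXi k) * RingQuot.mkAlgHom K _ (uX k) = 1 := by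
  rw [← map_mul, RingQuot.mkAlgHom_rel K (IBRel.ofX (XBRel.Xunit' k)), map_one]

theorem IB.sum_ue : ∑ i ∈ β.attach, RingQuot.mkAlgHom K (IBRel p q n β m N) (ue i) = 1 := by
  rw [← map_sum, RingQuot.mkAlgHom_rel K (IBRel.ofX XBRel.esum), map_one]

theorem IB.commute_uX_ue (k : Fin n) (i : {x // x ∈ β}) :
    Commute (RingQuot.mkAlgHom K (IBRel p q n β m N) (uX k)) (RingQuot.mkAlgHom K _ (ue i)) := by
  rw [Commute, SemiconjBy, ← map_mul, ← map_mul,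
    RingQuot.mkAlgHom_rel K (IBRel.ofX (XBRel.Xe k i))]

theorem IB.exists_sub_pow_mul_ue_eq_zero (i : {x // x ∈ β}) (k : Fin n) :
    ∃ M, (RingQuot.mkAlgHom K (IBRel p q n β m N) (uX k) - algebraMap K _ (i.1 k)) ^ M *
      RingQuot.mkAlgHom K _ (ue i) = 0 := by
  by_cases hk : k.1 = 0
  · obtain ⟨k, hk0⟩ := k
    obtain rfl : k = 0 := hk
    exact ⟨_, mkAlgHom_sub_pow_mul_eq_zero (IBRel.ofX (XBRel.cyc i _))⟩
  · exact ⟨_, mkAlgHom_sub_pow_mul_eq_zero (IBRel.ofX (XBRel.nil i k hk))⟩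

theorem IB.polyProd_uX_eq_zero (h0 : 0 < n) :
    polyProd (RingQuot.mkAlgHom K (IBRel p q n β m N) (uX ⟨0, h0⟩)) m.support m = 0 := by
  rw [← mul_one (polyProd _ _ _), ← IB.sum_ue, Finset.mul_sum]
  exact Finset.sum_eq_zero fun i _ =>
    polyProd_support_mul_eq_zero (mkAlgHom_sub_pow_mul_eq_zero (IBRel.ofX (XBRel.cyc i h0)))

theorem IB.algHom_ext {B : Type} [Ring B] [Algebra K B] {f g : IB p q n β m N →ₐ[K] B}
    (hX : ∀ k, f (RingQuot.mkAlgHom K _ (uX k)) = g (RingQuot.mkAlgHom K _ (uX k)))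
    (he : ∀ i, f (RingQuot.mkAlgHom K _ (ue i)) = g (RingQuot.mkAlgHom K _ (ue i)))
    (hφ : ∀ b, f (RingQuot.mkAlgHom K _ (uφ b)) = g (RingQuot.mkAlgHom K _ (uφ b)))
    (hφ0 : f (RingQuot.mkAlgHom K _ uφ0) = g (RingQuot.mkAlgHom K _ uφ0)) : f = g := by
  refine RingQuot.ringQuot_ext' K _ _ (FreeAlgebra.hom_ext ?_)
  funext x
  cases x with
  | phi0 => exact hφ0
  | phi b => exact hφ b
  | X k => exact hX k
  | e i => exact he i
  | Xinv k =>
    refine left_inv_eq_right_inv (a := f (RingQuot.mkAlgHom K _ (uX k))) ?_ ?_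
    · exact map_mul_eq_one f (IB.uXi_mul_uX k)
    · exact hX k ▸ map_mul_eq_one g (IB.uX_mul_uXi k)

theorem exists_corner_factorization {T : Finset (Fin n → K)}
    {E : (Fin n → K) → HeckeBc p q n m}
    (hspec : IsSpectralFamily (fun k => RingQuot.mkAlgHom K (HBcRel p q n m) (bX k)) T E)
    (σ : HeckeB p q n →ₐ[K] IB p q n β m N)
    (hσX : ∀ k, σ (RingQuot.mkAlgHom K (HBRel p q n) (bX k)) =
      RingQuot.mkAlgHom K (IBRel p q n β m N) (uX k)) :
    ∃ σbar : Corner (HeckeBc p q n m) (∑ i ∈ β, E i) →ₐ[K] IB p q n β m N,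
      (∀ a, σbar (cornerMk (K := K) _ (RingQuot.mkAlgHom K (HBcRel p q n m) a)) =
        σ (RingQuot.mkAlgHom K (HBRel p q n) a)) ∧
      ∀ i : {x // x ∈ β}, σbar (cornerMk (K := K) _ (E i.1)) =
        RingQuot.mkAlgHom K (IBRel p q n β m N) (ue i) := by
  set τ := liftCyclotomic (m := m) σ fun h0 => by rw [hσX]; exact IB.polyProd_uX_eq_zero h0
  have hτ : ∀ a, τ (RingQuot.mkAlgHom K _ a) = σ (RingQuot.mkAlgHom K _ a) :=
    liftCyclotomic_mk _ _
  have hτE : ∀ i : {x // x ∈ β}, τ (E i.1) = RingQuot.mkAlgHom K _ (ue i) :=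
    hspec.map_eq τ IB.sum_ue (fun i k => by rw [hτ, hσX]; exact IB.commute_uX_ue k i)
      (fun i k => by rw [hτ, hσX]; exact IB.exists_sub_pow_mul_ue_eq_zero i k)
  have hτβ : τ (∑ i ∈ β, E i) = 1 := by
    rw [map_sum, ← Finset.sum_attach, ← IB.sum_ue]
    exact Finset.sum_congr rfl fun i _ => hτE i
  exact ⟨cornerLift _ τ hτβ, fun a => by rw [cornerLift_cornerMk, hτ],
    fun i => by rw [cornerLift_cornerMk, hτE]⟩

end Presentations

theorem statement16_general {K : Type} [Field K] (p q : K) (m : K →₀ ℕ) (n : ℕ) (hn : 0 < n)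
    (β : Finset (Fin n → K))
    (T : Finset (Fin n → K)) (E : (Fin n → K) → HeckeBc p q n m)
    (hspec : IsSpectralFamily (fun k => RingQuot.mkAlgHom K (HBcRel p q n m) (bX k)) T E)
    (N : ℕ)
    (cInv : Fin (n - 1) → {x // x ∈ β} → Corner (HeckeBc p q n m) (∑ i ∈ β, E i))
    (c0Inv : {x // x ∈ β} → Corner (HeckeBc p q n m) (∑ i ∈ β, E i))
    (hcInv : ∀ b : Fin (n - 1), ∀ i : {x // x ∈ β}, i.1 (lo b) ≠ i.1 (hi b) →
      cInv b i * cornerMk (K := K) (∑ j ∈ β, E j)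
          (RingQuot.mkAlgHom K (HBcRel p q n m) (1 - bX (lo b) * bXi (hi b))) =
        cornerMk (K := K) (∑ j ∈ β, E j) (E i.1) ∧
      cInv b i * cornerMk (K := K) (∑ j ∈ β, E j) (E i.1) = cInv b i ∧
      cornerMk (K := K) (∑ j ∈ β, E j) (E i.1) * cInv b i = cInv b i ∧
      ∀ k : Fin n, Commute (cInv b i)
        (cornerMk (K := K) (∑ j ∈ β, E j) (RingQuot.mkAlgHom K (HBcRel p q n m) (bX k))))
    (hc0Inv : ∀ i : {x // x ∈ β}, (i.1 ⟨0, hn⟩)⁻¹ ≠ i.1 ⟨0, hn⟩ →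
      c0Inv i * cornerMk (K := K) (∑ j ∈ β, E j)
          (RingQuot.mkAlgHom K (HBcRel p q n m) (1 - bXi ⟨0, hn⟩ * bXi ⟨0, hn⟩)) =
        cornerMk (K := K) (∑ j ∈ β, E j) (E i.1) ∧
      c0Inv i * cornerMk (K := K) (∑ j ∈ β, E j) (E i.1) = c0Inv i ∧
      cornerMk (K := K) (∑ j ∈ β, E j) (E i.1) * c0Inv i = c0Inv i ∧
      ∀ k : Fin n, Commute (c0Inv i)
        (cornerMk (K := K) (∑ j ∈ β, E j) (RingQuot.mkAlgHom K (HBcRel p q n m) (bX k))))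
    (ρ : IB p q n β m N →ₐ[K] Corner (HeckeBc p q n m) (∑ i ∈ β, E i))
    (hρe : ∀ i : {x // x ∈ β}, ρ (RingQuot.mkAlgHom K (IBRel p q n β m N) (ue i)) =
      cornerMk (K := K) (∑ j ∈ β, E j) (E i.1))
    (hρX : ∀ k : Fin n, ρ (RingQuot.mkAlgHom K (IBRel p q n β m N) (uX k)) =
      cornerMk (K := K) (∑ j ∈ β, E j) (RingQuot.mkAlgHom K (HBcRel p q n m) (bX k)))
    (hρφ : ∀ b : Fin (n - 1), ρ (RingQuot.mkAlgHom K (IBRel p q n β m N) (uφ b)) =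
      cornerMk (K := K) (∑ j ∈ β, E j) (RingQuot.mkAlgHom K (HBcRel p q n m) (bg b)) -
      (∑ i ∈ β.attach, if i.1 (lo b) ≠ i.1 (hi b) then (q - q⁻¹) • cInv b i else 0) +
      ∑ i ∈ β.attach, if i.1 (lo b) = i.1 (hi b) then
        q⁻¹ • cornerMk (K := K) (∑ j ∈ β, E j) (E i.1) else 0)
    (hρφ0 : ρ (RingQuot.mkAlgHom K (IBRel p q n β m N) uφ0) =
      cornerMk (K := K) (∑ j ∈ β, E j) (RingQuot.mkAlgHom K (HBcRel p q n m) bg0) -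
      (∑ i ∈ β.attach, if (i.1 ⟨0, hn⟩)⁻¹ ≠ i.1 ⟨0, hn⟩ then (p - p⁻¹) • c0Inv i else 0) +
      ∑ i ∈ β.attach, if (i.1 ⟨0, hn⟩)⁻¹ = i.1 ⟨0, hn⟩ then
        p⁻¹ • cornerMk (K := K) (∑ j ∈ β, E j) (E i.1) else 0)
    (dInv : Fin (n - 1) → {x // x ∈ β} → IB p q n β m N)
    (d0Inv : {x // x ∈ β} → IB p q n β m N)
    (hdInv : ∀ b : Fin (n - 1), ∀ i : {x // x ∈ β}, i.1 (lo b) ≠ i.1 (hi b) →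
      dInv b i * RingQuot.mkAlgHom K (IBRel p q n β m N) (1 - uX (lo b) * uXi (hi b)) =
        RingQuot.mkAlgHom K (IBRel p q n β m N) (ue i) ∧
      dInv b i * RingQuot.mkAlgHom K (IBRel p q n β m N) (ue i) = dInv b i ∧
      RingQuot.mkAlgHom K (IBRel p q n β m N) (ue i) * dInv b i = dInv b i ∧
      ∀ k : Fin n, Commute (dInv b i) (RingQuot.mkAlgHom K (IBRel p q n β m N) (uX k)))
    (hd0Inv : ∀ i : {x // x ∈ β}, (i.1 ⟨0, hn⟩)⁻¹ ≠ i.1 ⟨0, hn⟩ →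
      d0Inv i * RingQuot.mkAlgHom K (IBRel p q n β m N) (1 - uXi ⟨0, hn⟩ * uXi ⟨0, hn⟩) =
        RingQuot.mkAlgHom K (IBRel p q n β m N) (ue i) ∧
      d0Inv i * RingQuot.mkAlgHom K (IBRel p q n β m N) (ue i) = d0Inv i ∧
      RingQuot.mkAlgHom K (IBRel p q n β m N) (ue i) * d0Inv i = d0Inv i ∧
      ∀ k : Fin n, Commute (d0Inv i) (RingQuot.mkAlgHom K (IBRel p q n β m N) (uX k)))
    (σ : HeckeB p q n →ₐ[K] IB p q n β m N)
    (hσX : ∀ k : Fin n, σ (RingQuot.mkAlgHom K (HBRel p q n) (bX k)) =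
      RingQuot.mkAlgHom K (IBRel p q n β m N) (uX k))
    (hσg : ∀ b : Fin (n - 1), σ (RingQuot.mkAlgHom K (HBRel p q n) (bg b)) =
      RingQuot.mkAlgHom K (IBRel p q n β m N) (uφ b) +
      (∑ i ∈ β.attach, if i.1 (lo b) ≠ i.1 (hi b) then (q - q⁻¹) • dInv b i else 0) -
      ∑ i ∈ β.attach, if i.1 (lo b) = i.1 (hi b) then
        q⁻¹ • RingQuot.mkAlgHom K (IBRel p q n β m N) (ue i) else 0)
    (hσg0 : σ (RingQuot.mkAlgHom K (HBRel p q n) bg0) =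
      RingQuot.mkAlgHom K (IBRel p q n β m N) uφ0 +
      (∑ i ∈ β.attach, if (i.1 ⟨0, hn⟩)⁻¹ ≠ i.1 ⟨0, hn⟩ then (p - p⁻¹) • d0Inv i else 0) -
      ∑ i ∈ β.attach, if (i.1 ⟨0, hn⟩)⁻¹ = i.1 ⟨0, hn⟩ then
        p⁻¹ • RingQuot.mkAlgHom K (IBRel p q n β m N) (ue i) else 0) :
    ∃ σbar : Corner (HeckeBc p q n m) (∑ i ∈ β, E i) →ₐ[K] IB p q n β m N,
      (∀ a : FreeAlgebra K (BGen n),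
        σbar (cornerMk (K := K) (∑ j ∈ β, E j) (RingQuot.mkAlgHom K (HBcRel p q n m) a)) =
          σ (RingQuot.mkAlgHom K (HBRel p q n) a)) ∧
      (∀ x : IB p q n β m N, σbar (ρ x) = x) ∧
      (∀ y : Corner (HeckeBc p q n m) (∑ i ∈ β, E i), ρ (σbar y) = y) := by
  obtain ⟨σbar, hσbar, hσbarE⟩ := exists_corner_factorization hspec σ hσX
  have hσXi : ∀ k, σ (RingQuot.mkAlgHom K _ (bXi k)) = RingQuot.mkAlgHom K _ (uXi k) := fun k =>
    map_eq_of_mul_eq_one σ (hσX k) (HeckeB.bXi_mul_bX k) (IB.uX_mul_uXi k)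
  have hρXi : ∀ k, ρ (RingQuot.mkAlgHom K _ (uXi k)) =
      cornerMk (K := K) _ (RingQuot.mkAlgHom K (HBcRel p q n m) (bXi k)) := fun k =>
    map_eq_of_mul_eq_one ρ (hρX k) (IB.uXi_mul_uX k) (map_mul_eq_one _ (HeckeBc.bX_mul_bXi k))
  have hσbarInv : ∀ b i, i.1 (lo b) ≠ i.1 (hi b) → σbar (cInv b i) = dInv b i := by
    intro b i h
    obtain ⟨c1, c2, -, -⟩ := hcInv b i h
    obtain ⟨d1, -, d3, d4⟩ := hdInv b i h
    have hXi := Commute.of_mul_eq_one (d4 (hi b)) (IB.uX_mul_uXi _) (IB.uXi_mul_uX _)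
    refine map_eq_of_local_inverse σbar c1 c2 d1 d3 ?_ ?_ (hσbarE i)
    · simpa using ((Commute.one_right _).sub_right ((d4 _).mul_right hXi)).symm
    · simp [hσbar, hσX, hσXi]
  have hσbarInv0 :
      ∀ i, (i.1 ⟨0, hn⟩)⁻¹ ≠ i.1 ⟨0, hn⟩ → σbar (c0Inv i) = d0Inv i := by
    intro i h
    obtain ⟨c1, c2, -, -⟩ := hc0Inv i h
    obtain ⟨d1, -, d3, d4⟩ := hd0Inv i h
    have hXi := Commute.of_mul_eq_one (d4 ⟨0, hn⟩) (IB.uX_mul_uXi _) (IB.uXi_mul_uX _)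
    refine map_eq_of_local_inverse σbar c1 c2 d1 d3 ?_ ?_ (hσbarE i)
    · simpa using ((Commute.one_right _).sub_right (hXi.mul_right hXi)).symm
    · simp [hσbar, hσXi]
  have hρInv : ∀ b i, i.1 (lo b) ≠ i.1 (hi b) → ρ (dInv b i) = cInv b i := by
    intro b i h
    obtain ⟨c1, -, c3, c4⟩ := hcInv b i h
    obtain ⟨d1, d2, -, -⟩ := hdInv b i h
    have hXi := Commute.of_mul_eq_one (c4 (hi b)) (map_mul_eq_one _ (HeckeBc.bX_mul_bXi _))
      (map_mul_eq_one _ (HeckeBc.bXi_mul_bX _))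
    refine map_eq_of_local_inverse ρ d1 d2 c1 c3 ?_ ?_ (hρe i)
    · simpa using ((Commute.one_right _).sub_right ((c4 _).mul_right hXi)).symm
    · simp [hρX, hρXi]
  have hρInv0 : ∀ i, (i.1 ⟨0, hn⟩)⁻¹ ≠ i.1 ⟨0, hn⟩ → ρ (d0Inv i) = c0Inv i := by
    intro i h
    obtain ⟨c1, -, c3, c4⟩ := hc0Inv i h
    obtain ⟨d1, d2, -, -⟩ := hd0Inv i h
    have hXi := Commute.of_mul_eq_one (c4 ⟨0, hn⟩) (map_mul_eq_one _ (HeckeBc.bX_mul_bXi _))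
      (map_mul_eq_one _ (HeckeBc.bXi_mul_bX _))
    refine map_eq_of_local_inverse ρ d1 d2 c1 c3 ?_ ?_ (hρe i)
    · simpa using ((Commute.one_right _).sub_right (hXi.mul_right hXi)).symm
    · simp [hρXi]
  have hleft : σbar.comp ρ = AlgHom.id K _ := by
    refine IB.algHom_ext (fun k => ?_) (fun i => ?_) (fun b => ?_) ?_ <;>
      simp only [AlgHom.comp_apply, AlgHom.id_apply]
    · rw [hρX, hσbar, hσX]
    · rw [hρe, hσbarE]
    · rw [hρφ, map_add, map_sub, hσbar, hσg, map_sum_ite_smul σbar _ _ _ (hσbarInv b),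
        map_sum_ite_smul σbar _ _ _ fun i _ => hσbarE i]
      abel
    · rw [hρφ0, map_add, map_sub, hσbar, hσg0, map_sum_ite_smul σbar _ _ _ hσbarInv0,
        map_sum_ite_smul σbar _ _ _ fun i _ => hσbarE i]
      abel
  have hright : ρ.comp σbar = AlgHom.id K _ := by
    refine Corner.heckeBc_algHom_ext (fun k => ?_) (fun b => ?_) ?_ <;>
      simp only [AlgHom.comp_apply, AlgHom.id_apply]
    · rw [hσbar, hσX, hρX]
    · rw [hσbar, hσg, map_sub, map_add, hρφ, map_sum_ite_smul ρ _ _ _ (hρInv b),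
        map_sum_ite_smul ρ _ _ _ fun i _ => hρe i]
      abel
    · rw [hσbar, hσg0, map_sub, map_add, hρφ0, map_sum_ite_smul ρ _ _ _ hρInv0,
        map_sum_ite_smul ρ _ _ _ fun i _ => hρe i]
      abel
  exact ⟨σbar, hσbar, AlgHom.congr_fun hleft, AlgHom.congr_fun hright⟩

/-- Lemma 7.4, type B.  With `ρ` and `σ` the homomorphisms of
Lemma 7.3 (characterized by their values on the generators), `σ` factors through the
canonical surjection `Ĥ(B_n) → e_β H(B_n)_{λ,m}` and the induced map is a two-sided
inverse of `ρ`; in particular `ρ` is an isomorphism. -/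
theorem statement16 {K : Type} [Field K] (p q : K)
    (hp : p ≠ 0) (hq : q ≠ 0) (hp2 : p ^ 2 ≠ 1) (hq2 : q ^ 2 ≠ 1) (hchar : (2 : K) ≠ 0)
    {l : ℕ} (lam : Fin l → K) (hlam : ∀ a, lam a ≠ 0)
    (hdisj : ∀ a b : Fin l, a ≠ b → Iset q (lam a) ∩ Iset q (lam b) = ∅)
    (m : K →₀ ℕ) (hm : ∀ x ∈ m.support, x ∈ Sset q lam)
    (n : ℕ) (hn : 0 < n)
    (β : Finset (Fin n → K)) (hβ : IsBOrbit (↑β : Set (Fin n → K)))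
    (hβS : ∀ i ∈ β, ∀ k, i k ∈ Sset q lam)
    (T : Finset (Fin n → K)) (E : (Fin n → K) → HeckeBc p q n m)
    (hspec : IsSpectralFamily (fun k => RingQuot.mkAlgHom K (HBcRel p q n m) (bX k)) T E)
    (N : ℕ)
    (hN : ∀ i ∈ T, ∀ k : Fin n,
      ((RingQuot.mkAlgHom K (HBcRel p q n m) (bX k) -
        algebraMap K (HeckeBc p q n m) (i k)) * E i) ^ N = 0)
    (cInv : Fin (n - 1) → {x // x ∈ β} → Corner (HeckeBc p q n m) (∑ i ∈ β, E i))
    (c0Inv : {x // x ∈ β} → Corner (HeckeBc p q n m) (∑ i ∈ β, E i))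
    (hcInv : ∀ b : Fin (n - 1), ∀ i : {x // x ∈ β}, i.1 (lo b) ≠ i.1 (hi b) →
      cInv b i * cornerMk (K := K) (∑ j ∈ β, E j)
          (RingQuot.mkAlgHom K (HBcRel p q n m) (1 - bX (lo b) * bXi (hi b))) =
        cornerMk (K := K) (∑ j ∈ β, E j) (E i.1) ∧
      cInv b i * cornerMk (K := K) (∑ j ∈ β, E j) (E i.1) = cInv b i ∧
      cornerMk (K := K) (∑ j ∈ β, E j) (E i.1) * cInv b i = cInv b i ∧
      ∀ k : Fin n, Commute (cInv b i)
        (cornerMk (K := K) (∑ j ∈ β, E j) (RingQuot.mkAlgHom K (HBcRel p q n m) (bX k))))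
    (hc0Inv : ∀ i : {x // x ∈ β}, (i.1 ⟨0, hn⟩)⁻¹ ≠ i.1 ⟨0, hn⟩ →
      c0Inv i * cornerMk (K := K) (∑ j ∈ β, E j)
          (RingQuot.mkAlgHom K (HBcRel p q n m) (1 - bXi ⟨0, hn⟩ * bXi ⟨0, hn⟩)) =
        cornerMk (K := K) (∑ j ∈ β, E j) (E i.1) ∧
      c0Inv i * cornerMk (K := K) (∑ j ∈ β, E j) (E i.1) = c0Inv i ∧
      cornerMk (K := K) (∑ j ∈ β, E j) (E i.1) * c0Inv i = c0Inv i ∧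
      ∀ k : Fin n, Commute (c0Inv i)
        (cornerMk (K := K) (∑ j ∈ β, E j) (RingQuot.mkAlgHom K (HBcRel p q n m) (bX k))))
    (ρ : IB p q n β m N →ₐ[K] Corner (HeckeBc p q n m) (∑ i ∈ β, E i))
    (hρe : ∀ i : {x // x ∈ β}, ρ (RingQuot.mkAlgHom K (IBRel p q n β m N) (ue i)) =
      cornerMk (K := K) (∑ j ∈ β, E j) (E i.1))
    (hρX : ∀ k : Fin n, ρ (RingQuot.mkAlgHom K (IBRel p q n β m N) (uX k)) =
      cornerMk (K := K) (∑ j ∈ β, E j) (RingQuot.mkAlgHom K (HBcRel p q n m) (bX k)))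
    (hρφ : ∀ b : Fin (n - 1), ρ (RingQuot.mkAlgHom K (IBRel p q n β m N) (uφ b)) =
      cornerMk (K := K) (∑ j ∈ β, E j) (RingQuot.mkAlgHom K (HBcRel p q n m) (bg b)) -
      (∑ i ∈ β.attach, if i.1 (lo b) ≠ i.1 (hi b) then (q - q⁻¹) • cInv b i else 0) +
      ∑ i ∈ β.attach, if i.1 (lo b) = i.1 (hi b) then
        q⁻¹ • cornerMk (K := K) (∑ j ∈ β, E j) (E i.1) else 0)
    (hρφ0 : ρ (RingQuot.mkAlgHom K (IBRel p q n β m N) uφ0) =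
      cornerMk (K := K) (∑ j ∈ β, E j) (RingQuot.mkAlgHom K (HBcRel p q n m) bg0) -
      (∑ i ∈ β.attach, if (i.1 ⟨0, hn⟩)⁻¹ ≠ i.1 ⟨0, hn⟩ then (p - p⁻¹) • c0Inv i else 0) +
      ∑ i ∈ β.attach, if (i.1 ⟨0, hn⟩)⁻¹ = i.1 ⟨0, hn⟩ then
        p⁻¹ • cornerMk (K := K) (∑ j ∈ β, E j) (E i.1) else 0)
    (dInv : Fin (n - 1) → {x // x ∈ β} → IB p q n β m N)
    (d0Inv : {x // x ∈ β} → IB p q n β m N)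
    (hdInv : ∀ b : Fin (n - 1), ∀ i : {x // x ∈ β}, i.1 (lo b) ≠ i.1 (hi b) →
      dInv b i * RingQuot.mkAlgHom K (IBRel p q n β m N) (1 - uX (lo b) * uXi (hi b)) =
        RingQuot.mkAlgHom K (IBRel p q n β m N) (ue i) ∧
      dInv b i * RingQuot.mkAlgHom K (IBRel p q n β m N) (ue i) = dInv b i ∧
      RingQuot.mkAlgHom K (IBRel p q n β m N) (ue i) * dInv b i = dInv b i ∧
      ∀ k : Fin n, Commute (dInv b i) (RingQuot.mkAlgHom K (IBRel p q n β m N) (uX k)))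
    (hd0Inv : ∀ i : {x // x ∈ β}, (i.1 ⟨0, hn⟩)⁻¹ ≠ i.1 ⟨0, hn⟩ →
      d0Inv i * RingQuot.mkAlgHom K (IBRel p q n β m N) (1 - uXi ⟨0, hn⟩ * uXi ⟨0, hn⟩) =
        RingQuot.mkAlgHom K (IBRel p q n β m N) (ue i) ∧
      d0Inv i * RingQuot.mkAlgHom K (IBRel p q n β m N) (ue i) = d0Inv i ∧
      RingQuot.mkAlgHom K (IBRel p q n β m N) (ue i) * d0Inv i = d0Inv i ∧
      ∀ k : Fin n, Commute (d0Inv i) (RingQuot.mkAlgHom K (IBRel p q n β m N) (uX k)))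
    (σ : HeckeB p q n →ₐ[K] IB p q n β m N)
    (hσX : ∀ k : Fin n, σ (RingQuot.mkAlgHom K (HBRel p q n) (bX k)) =
      RingQuot.mkAlgHom K (IBRel p q n β m N) (uX k))
    (hσg : ∀ b : Fin (n - 1), σ (RingQuot.mkAlgHom K (HBRel p q n) (bg b)) =
      RingQuot.mkAlgHom K (IBRel p q n β m N) (uφ b) +
      (∑ i ∈ β.attach, if i.1 (lo b) ≠ i.1 (hi b) then (q - q⁻¹) • dInv b i else 0) -
      ∑ i ∈ β.attach, if i.1 (lo b) = i.1 (hi b) then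
        q⁻¹ • RingQuot.mkAlgHom K (IBRel p q n β m N) (ue i) else 0)
    (hσg0 : σ (RingQuot.mkAlgHom K (HBRel p q n) bg0) =
      RingQuot.mkAlgHom K (IBRel p q n β m N) uφ0 +
      (∑ i ∈ β.attach, if (i.1 ⟨0, hn⟩)⁻¹ ≠ i.1 ⟨0, hn⟩ then (p - p⁻¹) • d0Inv i else 0) -
      ∑ i ∈ β.attach, if (i.1 ⟨0, hn⟩)⁻¹ = i.1 ⟨0, hn⟩ then
        p⁻¹ • RingQuot.mkAlgHom K (IBRel p q n β m N) (ue i) else 0) :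
    ∃ σbar : Corner (HeckeBc p q n m) (∑ i ∈ β, E i) →ₐ[K] IB p q n β m N,
      (∀ a : FreeAlgebra K (BGen n),
        σbar (cornerMk (K := K) (∑ j ∈ β, E j) (RingQuot.mkAlgHom K (HBcRel p q n m) a)) =
          σ (RingQuot.mkAlgHom K (HBRel p q n) a)) ∧
      (∀ x : IB p q n β m N, σbar (ρ x) = x) ∧
      (∀ y : Corner (HeckeBc p q n m) (∑ i ∈ β, E i), ρ (σbar y) = y) :=
  statement16_general p q m n hn β T E hspec N cInv c0Inv hcInv hc0Inv ρ hρe hρX hρφ hρφ0 dInv d0Inv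
    hdInv hd0Inv σ hσX hσg hσg0

end PdAW
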